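/- arXiv:2003.12166 — 8 statements merged into one kernel-verified Lean document; each statement's English description precedes it below -/
import Mathlib

section
/- Let A be a set of integers greater than 1 and let λ > 0 be real. Suppose that for every real x ≥ 2 one has Σ_{n∈A, n≤x} n^{−λ} ≤ Σ_{p∈𝒫(A), p≤x} p^{−λ}. Then for every real t > λ and every real x ≥ 2 one has Σ_{n∈A, n≤x} n^{−t} ≤ Σ_{p∈𝒫(A), p≤x} p^{−t}. -/
open scoped BigOperators ENNReal

/-- `primesOf A` is the set `𝒫(A)` of primes dividing some member of `A`. -/
def primesOf (A : Set ℕ) : Set ℕ := {p : ℕ | p.Prime ∧ ∃ n ∈ A, p ∣ n}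

/-- A set of integers greater than 1 is *primitive* if no element divides another. -/
def Primitive (A : Set ℕ) : Prop :=
  (∀ n ∈ A, 1 < n) ∧ ∀ a ∈ A, ∀ b ∈ A, a ≠ b → ¬a ∣ b

/-- A set `A` of integers greater than 1 with `|A| ≥ k + 1` is *k-primitive* if no element
divides the product of `k` distinct other elements of `A`. -/
def KPrimitive (k : ℕ) (A : Set ℕ) : Prop :=
  (∀ n ∈ A, 1 < n) ∧ (k : ℕ∞) + 1 ≤ A.encard ∧
    ∀ a ∈ A, ∀ B : Finset ℕ, ↑B ⊆ A \ {a} → B.card = k → ¬a ∣ ∏ b ∈ B, b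

/-- Abel summation identity. -/
lemma abel_identity (c w : ℕ → ℝ) (M : ℕ) :
    ∑ i ∈ Finset.range M, c i * w i =
      (∑ i ∈ Finset.range M, (w i - w (i + 1)) * ∑ j ∈ Finset.range (i + 1), c j)
        + (∑ j ∈ Finset.range M, c j) * w M := by
  induction M with
  | zero => simp
  | succ M ih =>
    rw [Finset.sum_range_succ (fun i => c i * w i), ih,
      Finset.sum_range_succ (fun i => (w i - w (i + 1)) * ∑ j ∈ Finset.range (i + 1), c j),
      Finset.sum_range_succ c M]
    ring

/-- Abel summation inequality. -/
lemma abel_ineq (a b w : ℕ → ℝ) (hw : Antitone w) (hw0 : ∀ n, 0 ≤ w n)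
    (hF : ∀ m, ∑ n ∈ Finset.range m, a n ≤ ∑ n ∈ Finset.range m, b n) (M : ℕ) :
    ∑ n ∈ Finset.range M, a n * w n ≤ ∑ n ∈ Finset.range M, b n * w n := by
  rw [abel_identity a w M, abel_identity b w M]
  apply add_le_add
  · apply Finset.sum_le_sum
    intro i _
    exact mul_le_mul_of_nonneg_left (hF (i + 1)) (sub_nonneg.2 (hw (Nat.le_succ i)))
  · exact mul_le_mul_of_nonneg_right (hF M) (hw0 M)

lemma tsum_setOf_eq_sum (S : Set ℕ) [DecidablePred (· ∈ S)] (f : ℕ → ℝ) (x : ℝ) (hx : 0 ≤ x) :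
    ∑' n : {n : ℕ | n ∈ S ∧ (n : ℝ) ≤ x}, f n =
      ∑ n ∈ (Finset.range (⌊x⌋₊ + 1)).filter (· ∈ S), f n := by
  have hset : {n : ℕ | n ∈ S ∧ (n : ℝ) ≤ x}
      = ↑((Finset.range (⌊x⌋₊ + 1)).filter (· ∈ S)) := by
    ext n
    simp [Finset.mem_filter, Finset.mem_range, Nat.lt_succ_iff, Nat.le_floor_iff hx, and_comm]
  rw [hset, Finset.tsum_subtype']

/-- If the partial-sum inequality `∑_{n ∈ A, n ≤ x} n^{-λ} ≤ ∑_{p ∈ 𝒫(A), p ≤ x} p^{-λ}`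
holds for every `x ≥ 2`, then it also holds with any exponent `t > λ`. -/
theorem sum_rpow_le_of_exponent_ge (A : Set ℕ) (hA : ∀ n ∈ A, 1 < n)
    (lam : ℝ) (hlam : 0 < lam)
    (h : ∀ x : ℝ, 2 ≤ x →
      ∑' n : {n : ℕ | n ∈ A ∧ (n : ℝ) ≤ x}, (1 : ℝ) / ((n : ℕ) : ℝ) ^ lam ≤
        ∑' p : {p : ℕ | p ∈ primesOf A ∧ (p : ℝ) ≤ x}, (1 : ℝ) / ((p : ℕ) : ℝ) ^ lam) :
    ∀ t : ℝ, lam < t → ∀ x : ℝ, 2 ≤ x →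
      ∑' n : {n : ℕ | n ∈ A ∧ (n : ℝ) ≤ x}, (1 : ℝ) / ((n : ℕ) : ℝ) ^ t ≤
        ∑' p : {p : ℕ | p ∈ primesOf A ∧ (p : ℝ) ≤ x}, (1 : ℝ) / ((p : ℕ) : ℝ) ^ t := by
  classical
  intro t ht x hx
  set δ : ℝ := t - lam with hδdef
  have hδ : 0 < δ := sub_pos.2 ht
  have hxnn : (0 : ℝ) ≤ x := by linarith
  -- conversions of tsums to finite sums
  have conv1 : ∀ (S : Set ℕ) (s y : ℝ), 0 ≤ y →
      (∑' n : {n : ℕ | n ∈ S ∧ (n : ℝ) ≤ y}, (1 : ℝ) / ((n : ℕ) : ℝ) ^ s) =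
        ∑ n ∈ Finset.range (⌊y⌋₊ + 1), (if n ∈ S then (1 : ℝ) / (n : ℝ) ^ s else 0) := by
    intro S s y hy
    have hset : {n : ℕ | n ∈ S ∧ (n : ℝ) ≤ y}
        = ↑((Finset.range (⌊y⌋₊ + 1)).filter (· ∈ S)) := by
      ext n
      simp [Finset.mem_filter, Finset.mem_range, Nat.lt_succ_iff, Nat.le_floor_iff hy, and_comm]
    rw [hset]
    exact (Finset.tsum_subtype' _ (fun n : ℕ => (1 : ℝ) / (n : ℝ) ^ s)).trans
      (Finset.sum_filter _ _)
  -- the weight function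
  set w : ℕ → ℝ := fun n => 1 / ((n : ℝ) ⊔ 1) ^ δ with hwdef
  have hw0 : ∀ n, 0 ≤ w n := by
    intro n
    have h1 : (0 : ℝ) < (n : ℝ) ⊔ 1 := lt_sup_iff.2 (Or.inr one_pos)
    positivity
  have hw : Antitone w := by
    intro m n hmn
    have h1 : (0 : ℝ) < (m : ℝ) ⊔ 1 := lt_sup_iff.2 (Or.inr one_pos)
    have h2 : ((m : ℝ) ⊔ 1) ^ δ ≤ ((n : ℝ) ⊔ 1) ^ δ := by
      apply Real.rpow_le_rpow (le_of_lt h1)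
      · exact sup_le_sup_right (Nat.cast_le.2 hmn) 1
      · exact le_of_lt hδ
    exact one_div_le_one_div_of_le (Real.rpow_pos_of_pos h1 δ) h2
  -- partial sums comparison
  have hP : ∀ p ∈ primesOf A, 1 < p := fun p hp => hp.1.one_lt
  have hF : ∀ m, ∑ n ∈ Finset.range m, (if n ∈ A then (1 : ℝ) / (n : ℝ) ^ lam else 0) ≤
      ∑ n ∈ Finset.range m, (if n ∈ primesOf A then (1 : ℝ) / (n : ℝ) ^ lam else 0) := by
    intro m
    rcases le_or_gt m 2 with hm | hm
    · have hz : ∑ n ∈ Finset.range m, (if n ∈ A then (1 : ℝ) / (n : ℝ) ^ lam else 0) = 0 := by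
        apply Finset.sum_eq_zero
        intro n hn
        have hn2 : n < 2 := lt_of_lt_of_le (Finset.mem_range.1 hn) hm
        have : n ∉ A := fun hnA => by have := hA n hnA; omega
        simp [this]
      rw [hz]
      apply Finset.sum_nonneg
      intro n _
      split <;> positivity
    · have h2 : (2 : ℝ) ≤ ((m - 1 : ℕ) : ℝ) := by
        have : (2 : ℕ) ≤ m - 1 := by omega
        exact_mod_cast this
      have hh := h ((m - 1 : ℕ) : ℝ) h2
      rw [conv1 A lam _ (by positivity), conv1 (primesOf A) lam _ (by positivity)] at hh
      have hm1 : ⌊((m - 1 : ℕ) : ℝ)⌋₊ + 1 = m := by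
        rw [Nat.floor_natCast]; omega
      rwa [hm1] at hh
  -- rewrite the goal
  rw [conv1 A t x hxnn, conv1 (primesOf A) t x hxnn]
  have hterm : ∀ (S : Set ℕ), (∀ n ∈ S, 1 < n) → ∀ n : ℕ,
      (if n ∈ S then (1 : ℝ) / (n : ℝ) ^ t else 0) =
        (if n ∈ S then (1 : ℝ) / (n : ℝ) ^ lam else 0) * w n := by
    intro S hS n
    by_cases hn : n ∈ S
    · have h1n : 1 < n := hS n hn
      have hn0 : (0 : ℝ) < (n : ℝ) := by exact_mod_cast Nat.lt_of_lt_of_le Nat.zero_lt_one h1n.le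
      have hsup : ((n : ℝ) ⊔ 1) = (n : ℝ) := by
        apply sup_eq_left.2
        exact_mod_cast h1n.le
      simp only [hn, if_pos, hwdef, hsup]
      rw [div_mul_div_comm, one_mul, ← Real.rpow_add hn0]
      norm_num [hδdef]
    · simp [hn]
  calc ∑ n ∈ Finset.range (⌊x⌋₊ + 1), (if n ∈ A then (1 : ℝ) / (n : ℝ) ^ t else 0)
      = ∑ n ∈ Finset.range (⌊x⌋₊ + 1),
          (if n ∈ A then (1 : ℝ) / (n : ℝ) ^ lam else 0) * w n := by
        exact Finset.sum_congr rfl fun n _ => hterm A hA n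
    _ ≤ ∑ n ∈ Finset.range (⌊x⌋₊ + 1),
          (if n ∈ primesOf A then (1 : ℝ) / (n : ℝ) ^ lam else 0) * w n :=
        abel_ineq _ _ w hw hw0 hF _
    _ = ∑ n ∈ Finset.range (⌊x⌋₊ + 1),
          (if n ∈ primesOf A then (1 : ℝ) / (n : ℝ) ^ t else 0) :=
        (Finset.sum_congr rfl fun n _ => (hterm (primesOf A) hP n).symm)
end

section
/- Let A be a set of integers greater than 1. Suppose that for every real x ≥ 2 one has Σ_{n∈A, n≤x} 1/n ≤ Σ_{p∈𝒫(A), p≤x} 1/p. Then Σ_{n∈A} 1/(n log n) ≤ Σ_{p∈𝒫(A)} 1/(p log p). -/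
/-!
Partial summation with the weights `1 / log m - 1 / log (m + 1) ≥ 0`: since
`1 / (n log n) = (1 / n) ∑_{m ≥ n} (1 / log m - 1 / log (m + 1))`, exchanging the order of
summation gives `∑_{n ∈ B} 1 / (n log n) = ∑_m (1 / log m - 1 / log (m + 1)) ∑_{n ∈ B, n ≤ m} 1 / n`
for every `B ⊆ [2, ∞)`, so the hypothesis compares the two sides weight by weight. Working in
`ℝ≥0∞` makes the exchange valid without any convergence assumption.
-/

open scoped BigOperators ENNReal

open Filter Topology

lemma hasSum_sub_succ_of_antitone {f : ℕ → ℝ} (hf : Antitone f)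
    (hlim : Tendsto f atTop (𝓝 0)) : HasSum (fun k ↦ f k - f (k + 1)) (f 0) := by
  rw [hasSum_iff_tendsto_nat_of_nonneg fun k ↦ sub_nonneg.2 (hf k.le_succ)]
  simp_rw [Finset.sum_range_sub']
  simpa using tendsto_const_nhds.sub hlim

lemma tsum_ofReal_sub_succ_nat_add {f : ℕ → ℝ} {n : ℕ} (hf : AntitoneOn f (Set.Ici n))
    (hlim : Tendsto f atTop (𝓝 0)) :
    ∑' k, ENNReal.ofReal (f (n + k) - f (n + k + 1)) = ENNReal.ofReal (f n) := by
  have hshift : Antitone fun k ↦ f (n + k) := fun a b hab ↦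
    hf (Nat.le_add_right n a) (Nat.le_add_right n b) (Nat.add_le_add_left hab n)
  have hsum : HasSum (fun k ↦ f (n + k) - f (n + k + 1)) (f n) := by
    simpa only [add_zero, add_assoc] using hasSum_sub_succ_of_antitone hshift
      (hlim.comp ((tendsto_add_atTop_nat n).congr fun k ↦ add_comm k n))
  have hnonneg (k : ℕ) : 0 ≤ f (n + k) - f (n + k + 1) := sub_nonneg.2 (hshift k.le_succ)
  rw [← hsum.tsum_eq, ENNReal.ofReal_tsum_of_nonneg hnonneg hsum.summable]

lemma tsum_mul_tsum_nat_add_eq (B : Set ℕ) (w d : ℕ → ℝ≥0∞) :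
    ∑' n : B, w n * ∑' k, d (n + k) = ∑' m, d m * ∑' n : {n | n ∈ B ∧ n ≤ m}, w n := by
  have htail (n : ℕ) : ∑' k, d (n + k) = ∑' m, (Set.Ici n).indicator d m := by
    rw [← (add_right_injective n).tsum_eq (f := (Set.Ici n).indicator d) fun m hm ↦
      ⟨m - n, Nat.add_sub_cancel' (Set.support_indicator_subset hm)⟩]
    simp
  simp_rw [htail, ← ENNReal.tsum_mul_left]
  rw [ENNReal.tsum_comm]
  refine tsum_congr fun m ↦ ?_
  rw [tsum_subtype B fun n ↦ w n * (Set.Ici n).indicator d m, tsum_subtype _ fun n ↦ d m * w n]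
  refine tsum_congr fun n ↦ ?_
  by_cases hB : n ∈ B <;> by_cases hm : n ≤ m <;> simp [Set.indicator_apply, hB, hm, mul_comm]

lemma antitoneOn_one_div_log_natCast : AntitoneOn (fun m : ℕ ↦ 1 / Real.log m) (Set.Ioi 1) :=
  fun a ha b _ hab ↦ one_div_le_one_div_of_le (Real.log_pos (by exact_mod_cast ha))
    (Real.log_le_log (by exact_mod_cast Nat.zero_lt_of_lt ha) (by exact_mod_cast hab))

lemma tendsto_one_div_log_natCast : Tendsto (fun m : ℕ ↦ 1 / Real.log m) atTop (𝓝 0) := by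
  simp_rw [one_div]
  exact (Real.tendsto_log_atTop.comp tendsto_natCast_atTop_atTop).inv_tendsto_atTop

lemma tsum_one_div_mul_log_eq (B : Set ℕ) (hB : ∀ n ∈ B, 1 < n) :
    ∑' n : B, ENNReal.ofReal (1 / (n * Real.log n)) =
      ∑' m : ℕ, ENNReal.ofReal (1 / Real.log m - 1 / Real.log ↑(m + 1)) *
        ∑' n : {n | n ∈ B ∧ n ≤ m}, ENNReal.ofReal (1 / n) := by
  rw [← tsum_mul_tsum_nat_add_eq B fun n ↦ ENNReal.ofReal (1 / n)]
  refine tsum_congr fun n ↦ ?_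
  have hn : 1 < (n : ℕ) := hB n n.2
  rw [tsum_ofReal_sub_succ_nat_add (antitoneOn_one_div_log_natCast.mono fun m hm ↦ hn.trans_le hm)
    tendsto_one_div_log_natCast, ← ENNReal.ofReal_mul (by positivity), one_div_mul_one_div]

lemma ofReal_tsum_one_div_of_le_natCast (B : Set ℕ) (m : ℕ) :
    ENNReal.ofReal (∑' n : {n | n ∈ B ∧ (n : ℝ) ≤ m}, (1 : ℝ) / n) =
      ∑' n : {n | n ∈ B ∧ n ≤ m}, ENNReal.ofReal (1 / n) := by
  have hset : {n | n ∈ B ∧ (n : ℝ) ≤ m} = {n | n ∈ B ∧ n ≤ m} := by simp only [Nat.cast_le]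
  rw [hset]
  have : Finite {n | n ∈ B ∧ n ≤ m} := ((Set.finite_Iic m).subset fun n hn ↦ hn.2).to_subtype
  exact ENNReal.ofReal_tsum_of_nonneg (fun _ ↦ by positivity) (.of_finite)

/-- If `∑_{n ∈ A, n ≤ x} 1/n ≤ ∑_{p ∈ 𝒫(A), p ≤ x} 1/p` for every `x ≥ 2`, then
`∑_{n ∈ A} 1/(n log n) ≤ ∑_{p ∈ 𝒫(A)} 1/(p log p)`. -/
theorem f_le_of_partial_sums (A : Set ℕ) (hA : ∀ n ∈ A, 1 < n)
    (h : ∀ x : ℝ, 2 ≤ x →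
      ∑' n : {n : ℕ | n ∈ A ∧ (n : ℝ) ≤ x}, (1 : ℝ) / ((n : ℕ) : ℝ) ≤
        ∑' p : {p : ℕ | p ∈ primesOf A ∧ (p : ℝ) ≤ x}, (1 : ℝ) / ((p : ℕ) : ℝ)) :
    ∑' n : A, ENNReal.ofReal (1 / ((n : ℕ) * Real.log (n : ℕ))) ≤
      ∑' p : primesOf A, ENNReal.ofReal (1 / ((p : ℕ) * Real.log (p : ℕ))) := by
  rw [tsum_one_div_mul_log_eq A hA, tsum_one_div_mul_log_eq _ fun p hp ↦ hp.1.one_lt]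
  refine ENNReal.tsum_le_tsum fun m ↦ mul_le_mul_right ?_ _
  rcases lt_or_ge m 2 with hm | hm
  · have hempty : {n | n ∈ A ∧ n ≤ m} = ∅ :=
      Set.eq_empty_of_forall_notMem fun n ⟨hnA, hnm⟩ ↦ by have := hA n hnA; omega
    simp [hempty]
  · simpa only [ofReal_tsum_one_div_of_le_natCast] using
      ENNReal.ofReal_le_ofReal (h m (by exact_mod_cast hm))
end

section
/- Let k ≥ 2 be an integer, let A be a k-primitive set of integers greater than 1, and let T be a finite subset of A with |𝒫(T)| = n. If n ≤ k, then |T| ≤ n. -/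
/-!
For each prime `p` dividing an element of `T`, keep one element of `T` of maximal `p`-adic
valuation. The at most `n` kept elements have a product divisible by every element of `T`, so if
`|T| > n` some `t ∈ T` divides the product of at most `n ≤ k` other elements of `A`; padding these
with further elements of `A` to exactly `k` contradicts `k`-primitivity.
-/

open scoped BigOperators ENNReal

lemma primesOf_coe_finset {T : Finset ℕ} (hT : 0 ∉ T) :
    primesOf ↑T = ↑(T.biUnion Nat.primeFactors) := by
  ext p
  simp only [primesOf, Set.mem_ofPred_eq, Finset.coe_biUnion, Finset.mem_coe, Set.mem_iUnion,
    Nat.mem_primeFactors, exists_prop]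
  exact ⟨fun ⟨hp, t, ht, hpt⟩ ↦ ⟨t, ht, hp, hpt, ne_of_mem_of_not_mem ht hT⟩,
    fun ⟨t, ht, hp, hpt, _⟩ ↦ ⟨hp, t, ht, hpt⟩⟩

lemma Nat.dvd_prod_of_forall_factorization_le {t : ℕ} {S : Finset ℕ} (ht : t ≠ 0) (hS : 0 ∉ S)
    (h : ∀ p ∈ t.primeFactors, ∃ s ∈ S, t.factorization p ≤ s.factorization p) :
    t ∣ ∏ s ∈ S, s := by
  have hS' : ∀ s ∈ S, s ≠ 0 := fun s hs ↦ ne_of_mem_of_not_mem hs hS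
  rw [← Nat.factorization_le_iff_dvd ht (Finset.prod_ne_zero_iff.mpr hS'),
    Nat.factorization_prod hS']
  intro p
  by_cases hp : p ∈ t.primeFactors
  · obtain ⟨s, hs, hts⟩ := h p hp
    rw [Finset.sum_apply']
    exact hts.trans (Finset.single_le_sum (f := fun s ↦ s.factorization p)
      (fun _ _ ↦ Nat.zero_le _) hs)
  · simp [Finsupp.notMem_support_iff.mp (by rwa [Nat.support_factorization])]

lemma Finset.exists_subset_card_le_forall_dvd_prod {T : Finset ℕ} (hT : 0 ∉ T) :
    ∃ S ⊆ T, S.card ≤ (T.biUnion Nat.primeFactors).card ∧ ∀ t ∈ T, t ∣ ∏ s ∈ S, s := by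
  rcases T.eq_empty_or_nonempty with rfl | hne
  · exact ⟨∅, subset_rfl, by simp, by simp⟩
  choose g hgT hg using fun p ↦ T.exists_max_image (fun t ↦ t.factorization p) hne
  have hST : (T.biUnion Nat.primeFactors).image g ⊆ T := by
    simpa only [Finset.image_subset_iff] using fun p _ ↦ hgT p
  refine ⟨_, hST, Finset.card_image_le, fun t ht ↦ ?_⟩
  refine Nat.dvd_prod_of_forall_factorization_le (ne_of_mem_of_not_mem ht hT)
    (fun h ↦ hT (hST h)) fun p hp ↦ ⟨g p, ?_, hg p t ht⟩
  exact Finset.mem_image_of_mem g (Finset.mem_biUnion.mpr ⟨t, ht, hp⟩)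

lemma KPrimitive.not_dvd_prod_of_card_le {k : ℕ} {A : Set ℕ} (hA : KPrimitive k A) {a : ℕ}
    (ha : a ∈ A) {S : Finset ℕ} (hSA : ↑S ⊆ A \ {a}) (hSk : S.card ≤ k) :
    ¬a ∣ ∏ s ∈ S, s := by
  obtain ⟨-, hcard, hndvd⟩ := hA
  have hk : (k : ℕ∞) ≤ (A \ {a}).encard := by
    rw [← Set.encard_sdiff_singleton_add_one ha] at hcard
    exact WithTop.le_of_add_le_add_right ENat.one_ne_top hcard
  obtain ⟨r, hSr, hrA, hrk⟩ := Set.exists_superset_subset_encard_eq hSA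
    (by rw [Set.encard_coe_eq_coe_finsetCard]; exact_mod_cast hSk) hk
  have hr : r.Finite := Set.finite_of_encard_eq_coe hrk
  have hBk : hr.toFinset.card = k := by
    rw [← Set.ncard_eq_toFinset_card r hr, Set.ncard_def, hrk, ENat.toNat_natCast]
  intro hdvd
  refine hndvd a ha hr.toFinset (by simpa using hrA) hBk
    (hdvd.trans (Finset.prod_dvd_prod_of_subset _ _ _ fun s hs ↦ ?_))
  simpa using hSr hs

theorem card_le_of_primesOf_card_le_general (k : ℕ) (A : Set ℕ) (hA : KPrimitive k A)
    (T : Finset ℕ) (hTA : ↑T ⊆ A) (n : ℕ) (hn : (primesOf ↑T).ncard = n) (hnk : n ≤ k) :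
    T.card ≤ n := by
  have hT0 : 0 ∉ T := fun h ↦ by have := hA.1 0 (hTA h); omega
  rw [primesOf_coe_finset hT0, Set.ncard_coe_finset] at hn
  obtain ⟨S, hST, hSn, hdvd⟩ := Finset.exists_subset_card_le_forall_dvd_prod hT0
  by_contra! hlt
  obtain ⟨t, ht, htS⟩ := Finset.exists_mem_notMem_of_card_lt_card (hSn.trans_lt (hn ▸ hlt))
  refine hA.not_dvd_prod_of_card_le (hTA ht) (fun s hs ↦ ⟨hTA (hST hs), ?_⟩)
    (by omega) (hdvd t ht)
  rintro rfl
  exact htS hs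

/-- If `A` is `k`-primitive (`k ≥ 2`) and `T ⊆ A` is finite with `|𝒫(T)| = n ≤ k`,
then `|T| ≤ n`. -/
theorem card_le_of_primesOf_card_le (k : ℕ) (hk : 2 ≤ k) (A : Set ℕ) (hA : KPrimitive k A)
    (T : Finset ℕ) (hTA : ↑T ⊆ A) (n : ℕ) (hn : (primesOf ↑T).ncard = n) (hnk : n ≤ k) :
    T.card ≤ n :=
  card_le_of_primesOf_card_le_general k A hA T hTA n hn hnk
end

section
/- Let λ ≥ 0.79 be real and let T be a 2-primitive set of integers greater than 1 such that for every prime p ∈ 𝒫(T) one has Σ_{t∈T, p∣t} t^{−λ} > p^{−λ}. Then for every prime p ∈ 𝒫(T), the set T_p = {t ∈ T : p ∣ t} has at least 3 elements. -/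
open scoped BigOperators ENNReal

private lemma tsum_set_singleton' (f : ℕ → ℝ≥0∞) (a : ℕ) :
    ∑' t : ({a} : Set ℕ), f t = f a := by
  rw [tsum_eq_single (⟨a, rfl⟩ : ({a} : Set ℕ))]
  intro b hb
  exact absurd (Subtype.ext (Set.mem_singleton_iff.mp b.2)) hb

private lemma tsum_set_pair' (f : ℕ → ℝ≥0∞) {a b : ℕ} (hab : a ≠ b) :
    ∑' t : ({a, b} : Set ℕ), f t = f a + f b := by
  rw [tsum_fintype, Finset.sum_set_coe, Set.toFinset_insert, Set.toFinset_singleton,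
    Finset.sum_pair hab]

private lemma pow79_two : (1.729 : ℝ) ≤ (2 : ℝ) ^ (0.79 : ℝ) := by
  have h : ((1.729 : ℝ)) ^ (100 : ℕ) ≤ ((2 : ℝ) ^ (0.79 : ℝ)) ^ (100 : ℕ) := by
    rw [← Real.rpow_natCast ((2:ℝ) ^ (0.79:ℝ)), ← Real.rpow_mul (by norm_num)]
    rw [show ((0.79 : ℝ) * (100 : ℕ)) = ((79 : ℕ) : ℝ) by norm_num, Real.rpow_natCast]
    norm_num
  exact le_of_pow_le_pow_left₀ (by norm_num) (Real.rpow_nonneg (by norm_num) _) h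

private lemma pow79_three : (2.38 : ℝ) ≤ (3 : ℝ) ^ (0.79 : ℝ) := by
  have h : ((2.38 : ℝ)) ^ (100 : ℕ) ≤ ((3 : ℝ) ^ (0.79 : ℝ)) ^ (100 : ℕ) := by
    rw [← Real.rpow_natCast ((3:ℝ) ^ (0.79:ℝ)), ← Real.rpow_mul (by norm_num)]
    rw [show ((0.79 : ℝ) * (100 : ℕ)) = ((79 : ℕ) : ℝ) by norm_num, Real.rpow_natCast]
    norm_num
  exact le_of_pow_le_pow_left₀ (by norm_num) (Real.rpow_nonneg (by norm_num) _) h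

/-- The key numerical inequality: `2^(-λ) + 3^(-λ) ≤ 1` for `λ ≥ 0.79`. -/
private lemma key_numeric {lam : ℝ} (hlam : 0.79 ≤ lam) :
    (2 : ℝ) ^ (-lam) + (3 : ℝ) ^ (-lam) ≤ 1 := by
  have h2 : (2 : ℝ) ^ (-lam) ≤ (2 : ℝ) ^ (-(0.79 : ℝ)) :=
    Real.rpow_le_rpow_of_exponent_le one_le_two (by linarith)
  have h3 : (3 : ℝ) ^ (-lam) ≤ (3 : ℝ) ^ (-(0.79 : ℝ)) :=
    Real.rpow_le_rpow_of_exponent_le (by norm_num) (by linarith)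
  have e2 : (2 : ℝ) ^ (-(0.79 : ℝ)) = ((2 : ℝ) ^ (0.79 : ℝ))⁻¹ := by
    rw [Real.rpow_neg (by norm_num)]
  have e3 : (3 : ℝ) ^ (-(0.79 : ℝ)) = ((3 : ℝ) ^ (0.79 : ℝ))⁻¹ := by
    rw [Real.rpow_neg (by norm_num)]
  have i2 : ((2 : ℝ) ^ (0.79 : ℝ))⁻¹ ≤ (1.729 : ℝ)⁻¹ := by
    apply inv_anti₀ (by norm_num) pow79_two
  have i3 : ((3 : ℝ) ^ (0.79 : ℝ))⁻¹ ≤ (2.38 : ℝ)⁻¹ := by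
    apply inv_anti₀ (by norm_num) pow79_three
  have : (1.729 : ℝ)⁻¹ + (2.38 : ℝ)⁻¹ ≤ 1 := by norm_num
  linarith [h2, h3, e2 ▸ i2, e3 ▸ i3]

/-- In a 2-primitive set, no element divides another. -/
private lemma kprim_not_dvd {T : Set ℕ} (hT : KPrimitive 2 T) {a b : ℕ}
    (ha : a ∈ T) (hb : b ∈ T) (hab : a ≠ b) : ¬ a ∣ b := by
  intro hdvd
  -- find a third element c of T
  have h3 : (3 : ℕ∞) ≤ T.encard := by
    have := hT.2.1; norm_num at this ⊢; convert this using 2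
  have hc : ∃ c ∈ T, c ∉ ({a, b} : Set ℕ) := by
    by_contra hcon
    push_neg at hcon
    have hsub : T ⊆ ({a, b} : Set ℕ) := fun c hcT => hcon c hcT
    have := (Set.encard_le_encard hsub).trans_eq (Set.encard_pair hab)
    have := h3.trans this
    norm_num at this
  obtain ⟨c, hcT, hcab⟩ := hc
  simp only [Set.mem_insert_iff, Set.mem_singleton_iff, not_or] at hcab
  have hbc : b ≠ c := fun e => hcab.2 e.symm
  refine hT.2.2 a ha {b, c} ?_ ?_ ?_
  · intro x hx
    simp only [Finset.coe_insert, Finset.coe_singleton, Set.mem_insert_iff,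
      Set.mem_singleton_iff] at hx
    rcases hx with rfl | rfl
    · exact ⟨hb, fun e => hab (Set.mem_singleton_iff.mp e).symm⟩
    · exact ⟨hcT, fun e => hcab.1 (Set.mem_singleton_iff.mp e)⟩
  · rw [Finset.card_insert_of_notMem (by simpa using hbc), Finset.card_singleton]
  · rw [Finset.prod_pair hbc]
    exact hdvd.trans (Dvd.intro c rfl)

/-- If `T` is 2-primitive, `λ ≥ 0.79`, and `∑_{t ∈ T_p} t^{-λ} > p^{-λ}` for each
`p ∈ 𝒫(T)`, then each `T_p = {t ∈ T : p ∣ t}` has at least 3 elements. -/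
theorem three_le_encard_Tp (lam : ℝ) (hlam : 0.79 ≤ lam) (T : Set ℕ) (hT : KPrimitive 2 T)
    (h : ∀ p ∈ primesOf T,
      ENNReal.ofReal (((p : ℕ) : ℝ) ^ (-lam)) <
        ∑' t : {t : ℕ | t ∈ T ∧ p ∣ t}, ENNReal.ofReal (((t : ℕ) : ℝ) ^ (-lam))) :
    ∀ p ∈ primesOf T, 3 ≤ {t : ℕ | t ∈ T ∧ p ∣ t}.encard := by
  intro p hp
  obtain ⟨hpp, n, hnT, hpn⟩ := hp
  let S : Set ℕ := {t : ℕ | t ∈ T ∧ p ∣ t}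
  let f : ℕ → ℝ≥0∞ := fun t => ENNReal.ofReal (((t : ℕ) : ℝ) ^ (-lam))
  have hsum := h p ⟨hpp, n, hnT, hpn⟩
  have hlam0 : (0 : ℝ) < lam := by linarith
  have hppos : (0 : ℝ) < (p : ℝ) := by exact_mod_cast hpp.pos
  -- antitonicity helper: p ≤ m → m^(-lam) ≤ p^(-lam)
  have hanti : ∀ m : ℕ, (p : ℝ) ≤ (m : ℝ) → ((m : ℝ)) ^ (-lam) ≤ ((p : ℝ)) ^ (-lam) :=
    fun m hm => Real.rpow_le_rpow_of_nonpos hppos hm (by linarith)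
  by_contra h3
  push_neg at h3
  have h2 : S.encard ≤ 2 := by
    rcases le_or_gt S.encard 2 with h' | h'
    · exact h'
    · exact absurd (Order.add_one_le_of_lt h') (by exact_mod_cast not_le.mpr h3)
  have hne : S.Nonempty := ⟨n, hnT, hpn⟩
  have hfin : S.Finite := Set.finite_of_encard_le_coe (by exact_mod_cast h2)
  -- encard is 1 or 2
  have hcases : S.encard = 1 ∨ S.encard = 2 := by
    have h1 : 1 ≤ S.encard := Set.one_le_encard_iff_nonempty.mpr hne
    have hm : S.encard = (hfin.toFinset.card : ℕ∞) := hfin.encard_eq_coe_toFinset_card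
    rw [hm] at h1 h2 ⊢
    have hle : hfin.toFinset.card ≤ 2 := by exact_mod_cast h2
    have hge : 1 ≤ hfin.toFinset.card := by exact_mod_cast h1
    rcases (by omega : hfin.toFinset.card = 1 ∨ hfin.toFinset.card = 2) with e | e <;>
      simp [e]
  rcases hcases with h1 | h1
  · -- singleton case
    obtain ⟨a, ha⟩ := Set.encard_eq_one.mp h1
    have haS : a ∈ S := ha ▸ rfl
    have ha' : {t : ℕ | t ∈ T ∧ p ∣ t} = ({a} : Set ℕ) := ha
    rw [ha', tsum_set_singleton' (fun n : ℕ => ENNReal.ofReal ((n : ℝ) ^ (-lam)))] at hsum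
    have ha1 : 1 < a := hT.1 a haS.1
    have hpa : (p : ℝ) ≤ (a : ℝ) := by
      exact_mod_cast Nat.le_of_dvd (by omega : 0 < a) haS.2
    exact absurd hsum (not_lt.mpr (ENNReal.ofReal_le_ofReal (hanti a hpa)))
  · -- pair case
    obtain ⟨a, b, hab, hS2⟩ := Set.encard_eq_two.mp h1
    have haS : a ∈ S := hS2 ▸ Set.mem_insert a {b}
    have hbS : b ∈ S := hS2 ▸ Set.mem_insert_of_mem a rfl
    have haT : a ∈ T := haS.1
    have hbT : b ∈ T := hbS.1
    have hpa : p ∣ a := haS.2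
    have hpb : p ∣ b := hbS.2
    have ha1 : 1 < a := hT.1 a haT
    have hb1 : 1 < b := hT.1 b hbT
    have hS2' : {t : ℕ | t ∈ T ∧ p ∣ t} = ({a, b} : Set ℕ) := hS2
    rw [hS2', tsum_set_pair' (fun n : ℕ => ENNReal.ofReal ((n : ℝ) ^ (-lam))) hab] at hsum
    -- neither a nor b equals p
    have hap : a ≠ p := by
      rintro rfl
      exact kprim_not_dvd hT haT hbT hab hpb
    have hbp : b ≠ p := by
      rintro rfl
      exact kprim_not_dvd hT hbT haT hab.symm hpa
    -- quotients
    obtain ⟨a', rfl⟩ := hpa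
    obtain ⟨b', rfl⟩ := hpb
    have ha2 : 2 ≤ a' := by
      rcases a' with _ | _ | a' <;> simp_all
    have hb2 : 2 ≤ b' := by
      rcases b' with _ | _ | b' <;> simp_all
    have hab' : a' ≠ b' := fun e => hab (by rw [e])
    -- the main estimate, stated symmetrically
    have main : ∀ x y : ℕ, 2 ≤ x → 3 ≤ y →
        f (p * x) + f (p * y) ≤ ENNReal.ofReal ((p : ℝ) ^ (-lam)) := by
      intro x y hx hy
      have hx0 : (0:ℝ) < 2 * (p:ℝ) := by linarith
      have hy0 : (0:ℝ) < 3 * (p:ℝ) := by linarith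
      have hfx : ((p * x : ℕ) : ℝ) ^ (-lam) ≤ (2 * (p:ℝ)) ^ (-lam) := by
        apply Real.rpow_le_rpow_of_nonpos hx0 _ (by linarith)
        have hx' : (2:ℝ) ≤ (x:ℝ) := by exact_mod_cast hx
        push_cast
        nlinarith [mul_le_mul_of_nonneg_left hx' hppos.le]
      have hfy : ((p * y : ℕ) : ℝ) ^ (-lam) ≤ (3 * (p:ℝ)) ^ (-lam) := by
        apply Real.rpow_le_rpow_of_nonpos hy0 _ (by linarith)
        have hy' : (3:ℝ) ≤ (y:ℝ) := by exact_mod_cast hy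
        push_cast
        nlinarith [mul_le_mul_of_nonneg_left hy' hppos.le]
      have hmul2 : (2 * (p:ℝ)) ^ (-lam) = (2:ℝ) ^ (-lam) * (p:ℝ) ^ (-lam) :=
        Real.mul_rpow (by norm_num) hppos.le
      have hmul3 : (3 * (p:ℝ)) ^ (-lam) = (3:ℝ) ^ (-lam) * (p:ℝ) ^ (-lam) :=
        Real.mul_rpow (by norm_num) hppos.le
      have hsum_le : ((p * x : ℕ) : ℝ) ^ (-lam) + ((p * y : ℕ) : ℝ) ^ (-lam)
          ≤ (p : ℝ) ^ (-lam) := by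
        have hkey := key_numeric hlam
        have hppow : (0:ℝ) ≤ (p:ℝ) ^ (-lam) := Real.rpow_nonneg hppos.le _
        nlinarith [hfx, hfy, hmul2, hmul3]
      calc f (p * x) + f (p * y)
          = ENNReal.ofReal (((p * x : ℕ) : ℝ) ^ (-lam) + ((p * y : ℕ) : ℝ) ^ (-lam)) := by
            rw [ENNReal.ofReal_add (Real.rpow_nonneg (by positivity) _)
              (Real.rpow_nonneg (by positivity) _)]
        _ ≤ ENNReal.ofReal ((p : ℝ) ^ (-lam)) := ENNReal.ofReal_le_ofReal hsum_le
    rcases hab'.lt_or_gt with hlt | hlt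
    · have : f (p * a') + f (p * b') ≤ ENNReal.ofReal ((p : ℝ) ^ (-lam)) :=
        main a' b' ha2 (by omega)
      exact absurd hsum (not_lt.mpr this)
    · have : f (p * b') + f (p * a') ≤ ENNReal.ofReal ((p : ℝ) ^ (-lam)) :=
        main b' a' hb2 (by omega)
      rw [add_comm] at this
      exact absurd hsum (not_lt.mpr this)
end

section
/- Let λ ≥ 0.79 be real and let T be a 2-primitive set of integers greater than 1 such that for every prime p ∈ 𝒫(T) one has Σ_{t∈T, p∣t} t^{−λ} > p^{−λ}. Then the map sending an ordered pair (t, p), with t ∈ T and p a prime dividing t, to the quotient t/p is injective: if t₁/p₁ = t₂/p₂ with t₁, t₂ ∈ T, p₁ prime dividing t₁, p₂ prime dividing t₂, then t₁ = t₂ and p₁ = p₂. -/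
open scoped BigOperators ENNReal

/-!
Suppose `t₁ = p₁ q` and `t₂ = p₂ q` with `p₁ ≠ p₂`. Any third `t ∈ T` divisible by `p₁` would
give `t₁ ∣ t₂ t`, against 2-primitivity, so `p₁` divides at most `t₁` and `t₂`. If `p₁ ∤ t₂`
the sum over `T_{p₁}` is `t₁^{-λ} ≤ p₁^{-λ}`. If `p₁ ∣ t₂` then `p₁ ∣ q`, so `q ≥ p₁` and the sum
is `q^{-λ} (p₁^{-λ} + p₂^{-λ}) ≤ p₁^{-λ} (2^{-λ} + 3^{-λ}) < p₁^{-λ}`, the last step being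
where `λ ≥ 0.79` enters. Either way the hypothesis at `p₁` fails.
-/

lemma le_rpow_div_of_pow_le {c x : ℝ} (hc : 0 ≤ c) (hx : 0 ≤ x) {m n : ℕ} (hn : n ≠ 0)
    (h : c ^ n ≤ x ^ m) : c ≤ x ^ ((m : ℝ) / n) := by
  rw [div_eq_mul_inv, Real.rpow_mul hx, Real.rpow_natCast]
  calc c = (c ^ n) ^ (n⁻¹ : ℝ) := (Real.pow_rpow_inv_natCast hc hn).symm
    _ ≤ (x ^ m) ^ (n⁻¹ : ℝ) := Real.rpow_le_rpow (by positivity) h (by positivity)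

lemma two_rpow_neg_add_three_rpow_neg_lt_one {lam : ℝ} (hlam : 0.79 ≤ lam) :
    (2 : ℝ) ^ (-lam) + (3 : ℝ) ^ (-lam) < 1 := by
  -- `2 ^ 0.79 ≈ 1.7291` and `3 ^ 0.79 ≈ 2.3819`: the reciprocals sum to about `0.998`, so the
  -- decimals below leave little room.
  have h79 : (0.79 : ℝ) = ((79 : ℕ) : ℝ) / (100 : ℕ) := by norm_num
  have h2 : (1729 / 1000 : ℝ) ≤ 2 ^ (0.79 : ℝ) :=
    h79 ▸ le_rpow_div_of_pow_le (by norm_num) (by norm_num) (by norm_num) (by norm_num)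
  have h3 : (23815 / 10000 : ℝ) ≤ 3 ^ (0.79 : ℝ) :=
    h79 ▸ le_rpow_div_of_pow_le (by norm_num) (by norm_num) (by norm_num) (by norm_num)
  have mono : ∀ b : ℝ, 1 ≤ b → b ^ (-lam) ≤ (b ^ (0.79 : ℝ))⁻¹ := fun b hb => by
    rw [← Real.rpow_neg (by positivity)]
    exact Real.rpow_le_rpow_of_exponent_le hb (by linarith)
  calc (2 : ℝ) ^ (-lam) + (3 : ℝ) ^ (-lam)
      ≤ (2 ^ (0.79 : ℝ))⁻¹ + (3 ^ (0.79 : ℝ))⁻¹ :=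
        add_le_add (mono 2 (by norm_num)) (mono 3 (by norm_num))
    _ ≤ (1729 / 1000)⁻¹ + (23815 / 10000)⁻¹ :=
        add_le_add (inv_anti₀ (by norm_num) h2) (inv_anti₀ (by norm_num) h3)
    _ < 1 := by norm_num

lemma Nat.Prime.rpow_neg_add_rpow_neg_le {p p' : ℕ} (hp : p.Prime) (hp' : p'.Prime)
    (hne : p ≠ p') {lam : ℝ} (hlam : 0 ≤ lam) :
    (p : ℝ) ^ (-lam) + (p' : ℝ) ^ (-lam) ≤ (2 : ℝ) ^ (-lam) + (3 : ℝ) ^ (-lam) := by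
  have le_at : ∀ {a : ℝ} {n : ℕ}, 0 < a → a ≤ n → (n : ℝ) ^ (-lam) ≤ a ^ (-lam) :=
    fun ha han => Real.rpow_le_rpow_of_nonpos ha han (by linarith)
  have le2 : ∀ {n : ℕ}, 2 ≤ n → (n : ℝ) ^ (-lam) ≤ (2 : ℝ) ^ (-lam) :=
    fun hn => le_at two_pos (by exact_mod_cast hn)
  have le3 : ∀ {n : ℕ}, 3 ≤ n → (n : ℝ) ^ (-lam) ≤ (3 : ℝ) ^ (-lam) :=
    fun hn => le_at three_pos (by exact_mod_cast hn)
  have h2 := hp.two_le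
  have h2' := hp'.two_le
  rcases (by omega : (2 ≤ p ∧ 3 ≤ p') ∨ (3 ≤ p ∧ 2 ≤ p')) with ⟨hp2, hp3⟩ | ⟨hp3, hp2⟩ <;>
    linarith [le2 hp2, le3 hp3]

lemma rpow_neg_mul_add_rpow_neg_mul_lt {p p' q : ℕ} (hp : p.Prime) (hp' : p'.Prime)
    (hne : p ≠ p') (hpq : p ≤ q) {lam : ℝ} (hlam : 0.79 ≤ lam) :
    ((p * q : ℕ) : ℝ) ^ (-lam) + ((p' * q : ℕ) : ℝ) ^ (-lam) < (p : ℝ) ^ (-lam) := by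
  have hp0 : (0 : ℝ) < p := by exact_mod_cast hp.pos
  have hq : (p : ℝ) ≤ q := by exact_mod_cast hpq
  have hpow : 0 < (p : ℝ) ^ (-lam) := Real.rpow_pos_of_pos hp0 _
  calc ((p * q : ℕ) : ℝ) ^ (-lam) + ((p' * q : ℕ) : ℝ) ^ (-lam)
      = (q : ℝ) ^ (-lam) * ((p : ℝ) ^ (-lam) + (p' : ℝ) ^ (-lam)) := by
        push_cast
        rw [Real.mul_rpow (by positivity) (by positivity),
          Real.mul_rpow (by positivity) (by positivity)]
        ring
    _ ≤ (p : ℝ) ^ (-lam) * ((2 : ℝ) ^ (-lam) + (3 : ℝ) ^ (-lam)) :=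
        mul_le_mul (Real.rpow_le_rpow_of_nonpos hp0 hq (by linarith))
          (hp.rpow_neg_add_rpow_neg_le hp' hne (by linarith)) (by positivity) hpow.le
    _ < (p : ℝ) ^ (-lam) := mul_lt_of_lt_one_right hpow
        (two_rpow_neg_add_three_rpow_neg_lt_one hlam)

lemma KPrimitive.not_dvd_mul {A : Set ℕ} (hA : KPrimitive 2 A) {a b c : ℕ} (ha : a ∈ A)
    (hb : b ∈ A) (hc : c ∈ A) (hab : a ≠ b) (hac : a ≠ c) (hbc : b ≠ c) : ¬a ∣ b * c := by
  have hsub : (({b, c} : Finset ℕ) : Set ℕ) ⊆ A \ {a} := by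
    rw [Finset.coe_pair, Set.insert_subset_iff, Set.singleton_subset_iff]
    exact ⟨⟨hb, hab.symm⟩, ⟨hc, hac.symm⟩⟩
  simpa [Finset.prod_pair hbc] using hA.2.2 a ha {b, c} hsub (Finset.card_pair hbc)

lemma KPrimitive.eq_or_eq_of_dvd {T : Set ℕ} (hT : KPrimitive 2 T) {p₁ p₂ q t : ℕ}
    (h₁ : p₁ * q ∈ T) (h₂ : p₂ * q ∈ T) (hne : p₁ * q ≠ p₂ * q) (ht : t ∈ T) (hdvd : p₁ ∣ t) :
    t = p₁ * q ∨ t = p₂ * q := by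
  by_contra! hne'
  obtain ⟨s, rfl⟩ := hdvd
  exact hT.not_dvd_mul h₁ h₂ ht hne hne'.1.symm hne'.2.symm ⟨p₂ * s, by ring⟩

lemma tsum_ofReal_le_ofReal_sum {S : Set ℕ} {s : Finset ℕ} (hS : S ⊆ s) {f : ℕ → ℝ}
    (hf : ∀ x, 0 ≤ f x) : ∑' x : S, ENNReal.ofReal (f x) ≤ ENNReal.ofReal (∑ x ∈ s, f x) := by
  rw [ENNReal.ofReal_sum_of_nonneg fun x _ => hf x, ← Finset.tsum_subtype']
  exact ENNReal.tsum_mono_subtype (fun x => ENNReal.ofReal (f x)) hS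

lemma tsum_rpow_neg_le_of_subset_pair {T : Set ℕ} {p p' q : ℕ} (hp : p.Prime)
    (hp' : p'.Prime) (hne : p ≠ p') (hq : 0 < q)
    (hsub : {t : ℕ | t ∈ T ∧ p ∣ t} ⊆ {p * q, p' * q}) {lam : ℝ} (hlam : 0.79 ≤ lam) :
    ∑' t : {t : ℕ | t ∈ T ∧ p ∣ t}, ENNReal.ofReal (((t : ℕ) : ℝ) ^ (-lam)) ≤
      ENNReal.ofReal ((p : ℝ) ^ (-lam)) := by
  have hf : ∀ n : ℕ, 0 ≤ (n : ℝ) ^ (-lam) := fun n => Real.rpow_nonneg n.cast_nonneg _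
  by_cases hpq : p ∣ q
  · have hS : {t : ℕ | t ∈ T ∧ p ∣ t} ⊆ (({p * q, p' * q} : Finset ℕ) : Set ℕ) := by
      simpa using hsub
    refine (tsum_ofReal_le_ofReal_sum hS hf).trans (ENNReal.ofReal_le_ofReal ?_)
    have hne' : p * q ≠ p' * q := fun h => hne (Nat.eq_of_mul_eq_mul_right hq h)
    rw [Finset.sum_pair hne']
    exact (rpow_neg_mul_add_rpow_neg_mul_lt hp hp' hne (Nat.le_of_dvd hq hpq) hlam).le
  · have hS : {t : ℕ | t ∈ T ∧ p ∣ t} ⊆ (({p * q} : Finset ℕ) : Set ℕ) := by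
      rintro t ⟨ht, hdvd⟩
      rcases hsub ⟨ht, hdvd⟩ with rfl | rfl
      · simp
      · exact absurd ((hp.dvd_mul.mp hdvd).resolve_left
          fun h => hne ((Nat.prime_dvd_prime_iff_eq hp hp').mp h)) hpq
    refine (tsum_ofReal_le_ofReal_sum hS hf).trans (ENNReal.ofReal_le_ofReal ?_)
    rw [Finset.sum_singleton]
    exact Real.rpow_le_rpow_of_nonpos (by exact_mod_cast hp.pos)
      (by exact_mod_cast Nat.le_mul_of_pos_right p hq) (by linarith)

/-- If `T` is 2-primitive, `λ ≥ 0.79`, and `∑_{t ∈ T_p} t^{-λ} > p^{-λ}` for each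
`p ∈ 𝒫(T)`, then the map `(t, p) ↦ t/p` (for `t ∈ T` and `p` a prime dividing `t`)
is injective. -/
theorem quotient_map_injective (lam : ℝ) (hlam : 0.79 ≤ lam) (T : Set ℕ)
    (hT : KPrimitive 2 T)
    (h : ∀ p ∈ primesOf T,
      ENNReal.ofReal (((p : ℕ) : ℝ) ^ (-lam)) <
        ∑' t : {t : ℕ | t ∈ T ∧ p ∣ t}, ENNReal.ofReal (((t : ℕ) : ℝ) ^ (-lam))) :
    ∀ t₁ ∈ T, ∀ t₂ ∈ T, ∀ p₁ p₂ : ℕ, p₁.Prime → p₂.Prime → p₁ ∣ t₁ → p₂ ∣ t₂ →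
      t₁ / p₁ = t₂ / p₂ → t₁ = t₂ ∧ p₁ = p₂ := by
  rintro _ ht₁ _ ht₂ p₁ p₂ hp₁ hp₂ ⟨q, rfl⟩ ⟨q', rfl⟩ hquo
  rw [Nat.mul_div_cancel_left _ hp₁.pos, Nat.mul_div_cancel_left _ hp₂.pos] at hquo
  subst hquo
  have hq : 0 < q := Nat.pos_of_mul_pos_left (one_pos.trans (hT.1 _ ht₁))
  suffices hp : p₁ = p₂ from ⟨hp ▸ rfl, hp⟩
  by_contra hne
  have hne' : p₁ * q ≠ p₂ * q := fun h => hne (Nat.eq_of_mul_eq_mul_right hq h)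
  have hsub : {t : ℕ | t ∈ T ∧ p₁ ∣ t} ⊆ {p₁ * q, p₂ * q} := fun t ⟨ht, hdvd⟩ =>
    hT.eq_or_eq_of_dvd ht₁ ht₂ hne' ht hdvd
  exact (h p₁ ⟨hp₁, _, ht₁, dvd_mul_right p₁ q⟩).not_ge
    (tsum_rpow_neg_le_of_subset_pair hp₁ hp₂ hne hq hsub hlam)
end

section
/- Let λ ≥ 0.79 be real and let T be a 2-primitive set of integers greater than 1 such that for every prime p ∈ 𝒫(T) one has Σ_{t∈T, p∣t} t^{−λ} > p^{−λ}. Then the set D := {t/p : t ∈ T, p a prime dividing t} is a primitive set, and every element of D is composite (greater than 1 and not prime). -/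
open scoped BigOperators ENNReal

/-- `∑'` over a two-element set. -/
lemma tsum_pair_eq {a b : ℕ} (hab : a ≠ b) (f : ℕ → ℝ≥0∞) :
    ∑' x : ({a, b} : Set ℕ), f x = f a + f b := by
  rw [show ({a, b} : Set ℕ) = (({a, b} : Finset ℕ) : Set ℕ) by simp,
    Finset.tsum_subtype', Finset.sum_pair hab]

/-- The key numerical inequality `2^(-λ) + 3^(-λ) < 1` for `λ ≥ 0.79`. -/
lemma key_23 (lam : ℝ) (hlam : 0.79 ≤ lam) : (2:ℝ)^(-lam) + (3:ℝ)^(-lam) < 1 := by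
  have pow_eq : ∀ b : ℝ, 0 ≤ b → (b ^ (0.79:ℝ)) ^ (100:ℕ) = b ^ (79:ℕ) := by
    intro b hb
    rw [← Real.rpow_natCast (b ^ (0.79:ℝ)) 100, ← Real.rpow_mul hb, ← Real.rpow_natCast b 79]
    norm_num
  have hb2 : (1.7288:ℝ) ≤ (2:ℝ) ^ (0.79:ℝ) := by
    by_contra hc
    push_neg at hc
    have h100 := pow_lt_pow_left₀ hc (Real.rpow_nonneg (by norm_num) _)
      (by norm_num : (100:ℕ) ≠ 0)
    rw [pow_eq 2 (by norm_num)] at h100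
    have hnum : (1.7288:ℝ)^(100:ℕ) ≤ 2^(79:ℕ) := by norm_num
    linarith
  have hb3 : (2.3814:ℝ) ≤ (3:ℝ) ^ (0.79:ℝ) := by
    by_contra hc
    push_neg at hc
    have h100 := pow_lt_pow_left₀ hc (Real.rpow_nonneg (by norm_num) _)
      (by norm_num : (100:ℕ) ≠ 0)
    rw [pow_eq 3 (by norm_num)] at h100
    have hnum : (2.3814:ℝ)^(100:ℕ) ≤ 3^(79:ℕ) := by norm_num
    linarith
  have h2 : (2:ℝ)^(-lam) ≤ (2:ℝ)^(-(0.79:ℝ)) :=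
    Real.rpow_le_rpow_of_exponent_le (by norm_num) (by linarith)
  have h3 : (3:ℝ)^(-lam) ≤ (3:ℝ)^(-(0.79:ℝ)) :=
    Real.rpow_le_rpow_of_exponent_le (by norm_num) (by linarith)
  have e2 : (2:ℝ)^(-(0.79:ℝ)) = ((2:ℝ)^(0.79:ℝ))⁻¹ := Real.rpow_neg (by norm_num) _
  have e3 : (3:ℝ)^(-(0.79:ℝ)) = ((3:ℝ)^(0.79:ℝ))⁻¹ := Real.rpow_neg (by norm_num) _
  have i2 : ((2:ℝ)^(0.79:ℝ))⁻¹ ≤ (1.7288:ℝ)⁻¹ := inv_anti₀ (by norm_num) hb2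
  have i3 : ((3:ℝ)^(0.79:ℝ))⁻¹ ≤ (2.3814:ℝ)⁻¹ := inv_anti₀ (by norm_num) hb3
  have hfin : (1.7288:ℝ)⁻¹ + (2.3814:ℝ)⁻¹ < 1 := by norm_num
  rw [e2] at h2
  rw [e3] at h3
  linarith

lemma base_mono (lam : ℝ) (hlam : 0.79 ≤ lam) {a b : ℝ} (ha : 0 < a) (hab : a ≤ b) :
    b^(-lam) ≤ a^(-lam) :=
  Real.rpow_le_rpow_of_nonpos ha hab (by linarith)

lemma key_2_3 (lam : ℝ) (hlam : 0.79 ≤ lam) (u v : ℕ) (hu : 2 ≤ u) (hv : 3 ≤ v) :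
    ((u:ℝ))^(-lam) + ((v:ℝ))^(-lam) < 1 := by
  have h1 : ((u:ℝ))^(-lam) ≤ (2:ℝ)^(-lam) :=
    base_mono lam hlam (by norm_num) (by exact_mod_cast hu)
  have h2 : ((v:ℝ))^(-lam) ≤ (3:ℝ)^(-lam) :=
    base_mono lam hlam (by norm_num) (by exact_mod_cast hv)
  linarith [key_23 lam hlam]

lemma key_pair (lam : ℝ) (hlam : 0.79 ≤ lam) {u v : ℕ} (hu : 2 ≤ u) (hv : 2 ≤ v)
    (huv : u ≠ v) : ((u:ℝ))^(-lam) + ((v:ℝ))^(-lam) < 1 := by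
  rcases Nat.lt_or_ge u v with hlt | hge
  · exact key_2_3 lam hlam u v hu (by omega)
  · have := key_2_3 lam hlam v u hv (by omega)
    linarith

lemma key_44 (lam : ℝ) (hlam : 0.79 ≤ lam) :
    ((4:ℕ):ℝ)^(-lam) + ((4:ℕ):ℝ)^(-lam) < 1 := by
  have h1 : ((4:ℕ):ℝ)^(-lam) ≤ (2:ℝ)^(-lam) :=
    base_mono lam hlam (by norm_num) (by norm_num)
  have h2 : ((4:ℕ):ℝ)^(-lam) ≤ (3:ℝ)^(-lam) :=
    base_mono lam hlam (by norm_num) (by norm_num)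
  linarith [key_23 lam hlam]

/-- The main analytic contradiction: if `x ≥ pu`, `y ≥ pv` with
`u^(-λ) + v^(-λ) < 1`, then `x^(-λ) + y^(-λ) < p^(-λ)`. -/
lemma helper (lam : ℝ) (hlam : 0.79 ≤ lam) {p x y u v : ℕ}
    (hp : 0 < p) (hu : 0 < u) (hv : 0 < v)
    (huv : ((u:ℝ))^(-lam) + ((v:ℝ))^(-lam) < 1)
    (hx : p * u ≤ x) (hy : p * v ≤ y) :
    ¬ (ENNReal.ofReal (((p:ℕ):ℝ)^(-lam)) <
        ENNReal.ofReal (((x:ℕ):ℝ)^(-lam)) + ENNReal.ofReal (((y:ℕ):ℝ)^(-lam))) := by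
  intro hlt
  have hppos : (0:ℝ) < (p:ℝ) := by exact_mod_cast hp
  have hupos : (0:ℝ) < (u:ℝ) := by exact_mod_cast hu
  have hvpos : (0:ℝ) < (v:ℝ) := by exact_mod_cast hv
  have hxpos : (0:ℝ) < (x:ℝ) := by
    have : 0 < x := lt_of_lt_of_le (Nat.mul_pos hp hu) hx
    exact_mod_cast this
  have hypos : (0:ℝ) < (y:ℝ) := by
    have : 0 < y := lt_of_lt_of_le (Nat.mul_pos hp hv) hy
    exact_mod_cast this
  have hxle : ((x:ℝ))^(-lam) ≤ ((p:ℝ)*(u:ℝ))^(-lam) :=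
    base_mono lam hlam (by positivity) (by exact_mod_cast hx)
  have hyle : ((y:ℝ))^(-lam) ≤ ((p:ℝ)*(v:ℝ))^(-lam) :=
    base_mono lam hlam (by positivity) (by exact_mod_cast hy)
  rw [Real.mul_rpow hppos.le hupos.le] at hxle
  rw [Real.mul_rpow hppos.le hvpos.le] at hyle
  rw [← ENNReal.ofReal_add (Real.rpow_nonneg hxpos.le _) (Real.rpow_nonneg hypos.le _),
    ENNReal.ofReal_lt_ofReal_iff
      (by positivity)] at hlt
  have hpr : (0:ℝ) < (p:ℝ)^(-lam) := Real.rpow_pos_of_pos hppos _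
  have hmul := mul_lt_mul_of_pos_left huv hpr
  rw [mul_add, mul_one] at hmul
  linarith

/-- If `T` is 2-primitive, `λ ≥ 0.79`, and `∑_{t ∈ T_p} t^{-λ} > p^{-λ}` for each
`p ∈ 𝒫(T)`, then `D = {t/p : t ∈ T, p prime, p ∣ t}` is a primitive set of
composite numbers. -/
theorem quotient_set_primitive_composite (lam : ℝ) (hlam : 0.79 ≤ lam) (T : Set ℕ)
    (hT : KPrimitive 2 T)
    (h : ∀ p ∈ primesOf T,
      ENNReal.ofReal (((p : ℕ) : ℝ) ^ (-lam)) <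
        ∑' t : {t : ℕ | t ∈ T ∧ p ∣ t}, ENNReal.ofReal (((t : ℕ) : ℝ) ^ (-lam))) :
    Primitive {d : ℕ | ∃ t ∈ T, ∃ p : ℕ, p.Prime ∧ p ∣ t ∧ d = t / p} ∧
      ∀ d ∈ {d : ℕ | ∃ t ∈ T, ∃ p : ℕ, p.Prime ∧ p ∣ t ∧ d = t / p},
        1 < d ∧ ¬d.Prime := by
  obtain ⟨hT1, hTcard, hTdvd⟩ := hT
  -- `T` is primitive.
  have hprim : ∀ a ∈ T, ∀ b ∈ T, a ≠ b → ¬ a ∣ b := by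
    intro a ha b hb hab hd
    have hne : (T \ {a, b}).Nonempty := by
      rw [Set.nonempty_iff_ne_empty]
      intro hemp
      rw [Set.diff_eq_empty] at hemp
      have h2 : T.encard ≤ 2 :=
        le_trans (Set.encard_le_encard hemp) (le_of_eq (Set.encard_pair hab))
      have h3 := le_trans hTcard h2
      norm_num at h3
    obtain ⟨c, hcT, hc⟩ := hne
    simp only [Set.mem_insert_iff, Set.mem_singleton_iff] at hc
    push_neg at hc
    have hbc : b ≠ c := fun e => hc.2 e.symm
    refine hTdvd a ha {b, c} ?_ (Finset.card_pair hbc) ?_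
    · intro x hx
      simp only [Finset.coe_insert, Finset.coe_singleton, Set.mem_insert_iff,
        Set.mem_singleton_iff] at hx
      rcases hx with rfl | rfl
      · exact ⟨hb, by simp [Ne.symm hab]⟩
      · exact ⟨hcT, by simp [hc.1]⟩
    · rw [Finset.prod_pair hbc]
      exact hd.mul_right c
  -- each prime of `𝒫(T)` divides at least two elements of `T`.
  have htwo : ∀ p : ℕ, p.Prime → ∀ t₁, t₁ ∈ T → p ∣ t₁ → ∃ t₂ ∈ T, p ∣ t₂ ∧ t₂ ≠ t₁ := by
    intro p hp t₁ ht₁ hpt₁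
    by_contra hc
    push_neg at hc
    have hset : {t : ℕ | t ∈ T ∧ p ∣ t} = {t₁} := by
      ext s
      simp only [Set.mem_setOf_eq, Set.mem_singleton_iff]
      exact ⟨fun hs => hc s hs.1 hs.2, fun e => e ▸ ⟨ht₁, hpt₁⟩⟩
    have hlt := h p ⟨hp, t₁, ht₁, hpt₁⟩
    rw [hset, tsum_singleton t₁ (fun n : ℕ => ENNReal.ofReal ((n:ℝ)^(-lam)))] at hlt
    have hle : ((t₁:ℝ))^(-lam) ≤ ((p:ℝ))^(-lam) := by
      refine base_mono lam hlam (by exact_mod_cast hp.pos) ?_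
      exact_mod_cast Nat.le_of_dvd (lt_trans one_pos (hT1 t₁ ht₁)) hpt₁
    exact absurd hlt (not_lt.mpr (ENNReal.ofReal_le_ofReal hle))
  -- every quotient `t / p` is composite.
  have hcomp : ∀ t ∈ T, ∀ p : ℕ, p.Prime → p ∣ t → 1 < t / p ∧ ¬ (t / p).Prime := by
    intro t ht p hp hpt
    obtain ⟨d, hpd⟩ := hpt
    have hpt : p ∣ t := ⟨d, hpd⟩
    have hdq : t / p = d := by rw [hpd, Nat.mul_div_cancel_left d hp.pos]
    rw [hdq]
    have ht1 : 1 < t := hT1 t ht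
    have hd0 : d ≠ 0 := by intro e; rw [e, mul_zero] at hpd; omega
    have hdne1 : d ≠ 1 := by
      intro e
      rw [e, mul_one] at hpd
      obtain ⟨t', ht', hpt', hne⟩ := htwo p hp t ht hpt
      exact hprim t ht t' ht' hne.symm (by rw [hpd]; exact hpt')
    refine ⟨by omega, ?_⟩
    intro hq
    have hddvd : d ∣ t := ⟨p, by rw [hpd]; ring⟩
    obtain ⟨t'', ht'', hpt'', hne''⟩ := htwo p hp t ht hpt
    by_cases hpq : p = d
    · -- `t = p²`
      by_cases hex : ∃ s ∈ T, p ∣ s ∧ s ≠ t ∧ s ≠ t''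
      · obtain ⟨s, hs, hps, hst, hst''⟩ := hex
        refine hTdvd t ht {t'', s} ?_ (Finset.card_pair (Ne.symm hst'')) ?_
        · intro x hx
          simp only [Finset.coe_insert, Finset.coe_singleton, Set.mem_insert_iff,
            Set.mem_singleton_iff] at hx
          rcases hx with rfl | rfl
          · exact ⟨ht'', by simp [hne'']⟩
          · exact ⟨hs, by simp [hst]⟩
        · rw [Finset.prod_pair (Ne.symm hst''), hpd, ← hpq]
          exact mul_dvd_mul hpt'' hps
      · push_neg at hex
        have hset : {x : ℕ | x ∈ T ∧ p ∣ x} = {t, t''} := by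
          ext s
          simp only [Set.mem_setOf_eq, Set.mem_insert_iff, Set.mem_singleton_iff]
          constructor
          · rintro ⟨hs, hps⟩
            by_cases e : s = t
            · exact Or.inl e
            · exact Or.inr (hex s hs hps e)
          · rintro (rfl | rfl)
            · exact ⟨ht, hpt⟩
            · exact ⟨ht'', hpt''⟩
        obtain ⟨m, hm⟩ := hpt''
        have ht''1 : 1 < t'' := hT1 t'' ht''
        have hm0 : m ≠ 0 := by intro e; rw [e, mul_zero] at hm; omega
        have hm1 : m ≠ 1 := by
          intro e
          rw [e, mul_one] at hm
          exact hprim t'' ht'' t ht hne'' (by rw [hm]; exact hpt)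
        have hmp : m ≠ p := by
          intro e
          subst e
          subst hpq
          exact hne'' (hm.trans hpd.symm)
        have hteq : t = p * p := by rw [hpd, ← hpq]
        have hlt := h p ⟨hp, t, ht, hpt⟩
        rw [hset, tsum_pair_eq (Ne.symm hne'')
          (fun n : ℕ => ENNReal.ofReal ((n:ℝ)^(-lam)))] at hlt
        exact helper lam hlam hp.pos hp.pos (by omega)
          (key_pair lam hlam (u := p) (v := m) hp.two_le (by omega) (Ne.symm hmp))
          (le_of_eq hteq.symm) (le_of_eq hm.symm) hlt
    · -- `t = p·d` with `d` a prime different from `p`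
      obtain ⟨t', ht', hdt', hne'⟩ := htwo d hq t ht hddvd
      by_cases htt : t' = t''
      · have hcop : Nat.Coprime p d := (Nat.coprime_primes hp hq).mpr hpq
        have hdvd : t ∣ t' := by
          rw [hpd]
          exact hcop.mul_dvd_of_dvd_of_dvd (htt ▸ hpt'') hdt'
        exact hprim t ht t' ht' hne'.symm hdvd
      · refine hTdvd t ht {t'', t'} ?_ (Finset.card_pair (Ne.symm htt)) ?_
        · intro x hx
          simp only [Finset.coe_insert, Finset.coe_singleton, Set.mem_insert_iff,
            Set.mem_singleton_iff] at hx
          rcases hx with rfl | rfl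
          · exact ⟨ht'', by simp [hne'']⟩
          · exact ⟨ht', by simp [hne']⟩
        · rw [Finset.prod_pair (Ne.symm htt), hpd]
          exact mul_dvd_mul hpt'' hdt'
  refine ⟨⟨?_, ?_⟩, ?_⟩
  · rintro n ⟨t, ht, p, hp, hpt, rfl⟩
    exact (hcomp t ht p hp hpt).1
  · rintro a ha b hb hne hdvd
    obtain ⟨t₁, ht₁, p₁, hp₁, hpt₁, rfl⟩ := ha
    obtain ⟨t₂, ht₂, p₂, hp₂, hpt₂, rfl⟩ := hb
    obtain ⟨d₁, he₁⟩ := hpt₁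
    have hpt₁ : p₁ ∣ t₁ := ⟨d₁, he₁⟩
    obtain ⟨d₂, he₂⟩ := hpt₂
    have hpt₂ : p₂ ∣ t₂ := ⟨d₂, he₂⟩
    have hq₁ : t₁ / p₁ = d₁ := by rw [he₁, Nat.mul_div_cancel_left d₁ hp₁.pos]
    have hq₂ : t₂ / p₂ = d₂ := by rw [he₂, Nat.mul_div_cancel_left d₂ hp₂.pos]
    rw [hq₁, hq₂] at hne hdvd
    have hcomp₁ := hcomp t₁ ht₁ p₁ hp₁ hpt₁
    have hcomp₂ := hcomp t₂ ht₂ p₂ hp₂ hpt₂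
    rw [hq₁] at hcomp₁
    rw [hq₂] at hcomp₂
    have hd₁4 : 4 ≤ d₁ := by
      rcases hcomp₁ with ⟨h1, h2⟩
      by_contra hlt
      push_neg at hlt
      interval_cases d₁
      · exact h2 (by norm_num)
      · exact h2 (by norm_num)
    have hd₂4 : 4 ≤ d₂ := by
      rcases hcomp₂ with ⟨h1, h2⟩
      by_contra hlt
      push_neg at hlt
      interval_cases d₂
      · exact h2 (by norm_num)
      · exact h2 (by norm_num)
    by_cases htt : t₁ = t₂
    · subst htt
      obtain ⟨k, hk⟩ := hdvd
      have hpk : p₁ = p₂ * k := by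
        have h' : p₁ * d₁ = p₂ * k * d₁ := by
          rw [← he₁]
          rw [he₂, hk]
          ring
        exact Nat.eq_of_mul_eq_mul_right (by omega) h'
      have hp21 : p₂ = p₁ := (Nat.prime_dvd_prime_iff_eq hp₂ hp₁).mp ⟨k, hpk⟩
      have hk1 : k = 1 := by
        rw [hp21] at hpk
        have := Nat.eq_of_mul_eq_mul_left hp₁.pos (by rw [mul_one, ← hpk] : p₁ * 1 = p₁ * k)
        omega
      exact hne (by rw [hk, hk1, mul_one])
    · by_cases hex : ∃ s ∈ T, p₁ ∣ s ∧ s ≠ t₁ ∧ s ≠ t₂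
      · obtain ⟨s, hs, hps, hst₁, hst₂⟩ := hex
        refine hTdvd t₁ ht₁ {s, t₂} ?_ (Finset.card_pair hst₂) ?_
        · intro x hx
          simp only [Finset.coe_insert, Finset.coe_singleton, Set.mem_insert_iff,
            Set.mem_singleton_iff] at hx
          rcases hx with rfl | rfl
          · exact ⟨hs, by simp [hst₁]⟩
          · exact ⟨ht₂, by simp [Ne.symm htt]⟩
        · rw [Finset.prod_pair hst₂, he₁]
          have hd₂t₂ : d₂ ∣ t₂ := ⟨p₂, by rw [he₂]; ring⟩
          exact mul_dvd_mul hps (hdvd.trans hd₂t₂)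
      · push_neg at hex
        obtain ⟨t₃, ht₃, hpt₃, hne₃⟩ := htwo p₁ hp₁ t₁ ht₁ hpt₁
        have ht₃2 : t₃ = t₂ := hex t₃ ht₃ hpt₃ hne₃
        have hp₁t₂ : p₁ ∣ t₂ := ht₃2 ▸ hpt₃
        by_cases hpp : p₁ = p₂
        · refine hprim t₁ ht₁ t₂ ht₂ htt ?_
          rw [he₁, he₂, hpp]
          exact mul_dvd_mul_left p₂ hdvd
        · have hp₁d₂ : p₁ ∣ d₂ := by
            rcases (Nat.Prime.dvd_mul hp₁).mp (he₂ ▸ hp₁t₂) with hc | hc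
            · exact absurd ((Nat.prime_dvd_prime_iff_eq hp₁ hp₂).mp hc) hpp
            · exact hc
          have hd₂p : d₂ ≠ p₁ := fun e => hcomp₂.2 (e ▸ hp₁)
          obtain ⟨n, hn⟩ := hp₁d₂
          have hn0 : n ≠ 0 := by intro e; rw [e, mul_zero] at hn; omega
          have hn1 : n ≠ 1 := by intro e; rw [e, mul_one] at hn; exact hd₂p hn
          have hd₂ge : p₁ * 2 ≤ d₂ := by
            rw [hn]
            exact Nat.mul_le_mul (le_refl p₁) (by omega)
          have ht₂ge : p₁ * 4 ≤ t₂ := by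
            have hmul : 2 * (p₁ * 2) ≤ p₂ * d₂ := Nat.mul_le_mul hp₂.two_le hd₂ge
            rw [he₂]
            omega
          have ht₁ge : p₁ * 4 ≤ t₁ := by
            rw [he₁]
            exact Nat.mul_le_mul (le_refl p₁) hd₁4
          have hset : {x : ℕ | x ∈ T ∧ p₁ ∣ x} = {t₁, t₂} := by
            ext s
            simp only [Set.mem_setOf_eq, Set.mem_insert_iff, Set.mem_singleton_iff]
            constructor
            · rintro ⟨hs, hps⟩
              by_cases e : s = t₁
              · exact Or.inl e
              · exact Or.inr (hex s hs hps e)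
            · rintro (rfl | rfl)
              · exact ⟨ht₁, hpt₁⟩
              · exact ⟨ht₂, hp₁t₂⟩
          have hlt := h p₁ ⟨hp₁, t₁, ht₁, hpt₁⟩
          rw [hset, tsum_pair_eq htt
            (fun n : ℕ => ENNReal.ofReal ((n:ℝ)^(-lam)))] at hlt
          exact helper lam hlam hp₁.pos (by norm_num) (by norm_num)
            (key_44 lam hlam) ht₁ge ht₂ge hlt
  · rintro dd ⟨t, ht, p, hp, hpt, rfl⟩
    exact hcomp t ht p hp hpt
end

section
/- Let T be a finite 2-primitive set of integers greater than 1. For an integer t > 1, write t = m(t)·M(t) where m(t) ≤ M(t) are positive integers with the ratio M(t)/m(t) minimal (equivalently, m(t) is the largest divisor of t not exceeding √t and M(t) = t/m(t)). Then there exists an injective function g : T → ℤ such that g(t) ∈ {m(t), M(t)} for every t ∈ T. -/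
open scoped BigOperators ENNReal

/-- Leaf lemma: in a nonempty subset `S` of a 2-primitive set `T`, some element has a
"private" value among `{m t, t / m t}`, shared with no other element of `S`. -/
lemma leaf_lemma (T S : Finset ℕ) (hS : S ⊆ T) (hne : S.Nonempty)
    (h2 : ∀ a ∈ T, ∀ b ∈ T, ∀ c ∈ T, a ≠ b → a ≠ c → b ≠ c → ¬a ∣ b * c)
    (m : ℕ → ℕ)
    (hm : ∀ t ∈ T, m t ∣ t ∧ m t ^ 2 ≤ t ∧ ∀ d : ℕ, d ∣ t → d ^ 2 ≤ t → d ≤ m t) :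
    ∃ t ∈ S, ∃ v : ℕ, (v = m t ∨ v = t / m t) ∧
      ∀ s ∈ S, s ≠ t → ¬(v = m s ∨ v = s / m s) := by
  classical
  by_contra hcon
  push_neg at hcon
  obtain ⟨t0, ht0S⟩ := hne
  have ht0T := hS ht0S
  have key : ∀ u ∈ T, m u * (u / m u) = u := fun u hu =>
    Nat.mul_div_cancel' (hm u hu).1
  have hdvd : ∀ u ∈ T, ∀ v : ℕ, (v = m u ∨ v = u / m u) → v ∣ u := by
    rintro u hu v (rfl | rfl)
    · exact (hm u hu).1
    · exact Nat.div_dvd_of_dvd (hm u hu).1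
  by_cases hloop : m t0 = t0 / m t0
  · -- loop case : t0 = v * v with v = m t0
    obtain ⟨s, hsS, hst0, hvs⟩ := hcon t0 ht0S (m t0) (Or.inl rfl)
    set v := m t0 with hv
    have hsT := hS hsS
    have ht0eq : t0 = v * v := by
      conv_lhs => rw [← key t0 ht0T]
      rw [← hloop]
    have hu : ∃ u : ℕ, u ≠ v ∧ (u = m s ∨ u = s / m s) ∧ s = v * u := by
      rcases hvs with h | h
      · refine ⟨s / m s, ?_, Or.inr rfl, by rw [h, key s hsT]⟩
        intro huv
        apply hst0
        rw [← key s hsT, huv, ← h, ht0eq]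
      · refine ⟨m s, ?_, Or.inl rfl, by rw [h, mul_comm, key s hsT]⟩
        intro huv
        apply hst0
        rw [← key s hsT, ← h, huv, ht0eq]
    obtain ⟨u, huv, hups, hseq⟩ := hu
    obtain ⟨e, heS, hes, hue⟩ := hcon s hsS u hups
    have heT := hS heS
    have het0 : e ≠ t0 := by
      rintro rfl
      rcases hue with h | h
      · exact huv h
      · exact huv (h.trans hloop.symm)
    obtain ⟨w, hw⟩ := hdvd e heT u hue
    refine h2 s hsT t0 ht0T e heT hst0 (Ne.symm hes) (Ne.symm het0) ⟨v * w, ?_⟩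
    rw [ht0eq, hw, hseq]
    ring
  · -- non-loop case : t0 = v1 * v2 with v1 ≠ v2
    obtain ⟨a, haS, hat0, hva⟩ := hcon t0 ht0S (m t0) (Or.inl rfl)
    obtain ⟨b, hbS, hbt0, hvb⟩ := hcon t0 ht0S (t0 / m t0) (Or.inr rfl)
    have haT := hS haS
    have hbT := hS hbS
    have hab : a ≠ b := by
      rintro rfl
      apply hat0
      rcases hva with h1 | h1 <;> rcases hvb with h2 | h2
      · exact absurd (h1.trans h2.symm) hloop
      · rw [← key a haT, ← h2, ← h1, key t0 ht0T]
      · rw [← key a haT, ← h1, ← h2, mul_comm, key t0 ht0T]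
      · exact absurd (h1.trans h2.symm) hloop
    obtain ⟨a', ha'⟩ := hdvd a haT _ hva
    obtain ⟨b', hb'⟩ := hdvd b hbT _ hvb
    refine h2 t0 ht0T a haT b hbT (Ne.symm hat0) (Ne.symm hbt0) hab ⟨a' * b', ?_⟩
    rw [ha', hb']
    conv_rhs => rw [← key t0 ht0T]
    ring

/-- Inductive construction of the matching. -/
lemma match_aux (T : Finset ℕ)
    (h2 : ∀ a ∈ T, ∀ b ∈ T, ∀ c ∈ T, a ≠ b → a ≠ c → b ≠ c → ¬a ∣ b * c)
    (m : ℕ → ℕ)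
    (hm : ∀ t ∈ T, m t ∣ t ∧ m t ^ 2 ≤ t ∧ ∀ d : ℕ, d ∣ t → d ^ 2 ≤ t → d ≤ m t) :
    ∀ n : ℕ, ∀ S : Finset ℕ, S.card = n → S ⊆ T →
      ∃ c : ℕ → ℕ, Set.InjOn c ↑S ∧ ∀ t ∈ S, c t = m t ∨ c t = t / m t := by
  classical
  intro n
  induction n with
  | zero =>
    intro S hcard _
    rw [Finset.card_eq_zero] at hcard
    subst hcard
    exact ⟨m, by simp, by simp⟩
  | succ n ih =>
    intro S hcard hsub
    have hne : S.Nonempty := Finset.card_pos.mp (by omega)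
    obtain ⟨t, htS, v, hv, hpriv⟩ := leaf_lemma T S hsub hne h2 m hm
    obtain ⟨c, hinj, hval⟩ := ih (S.erase t)
      (by simp [Finset.card_erase_of_mem htS, hcard])
      ((Finset.erase_subset t S).trans hsub)
    refine ⟨Function.update c t v, ?_, ?_⟩
    · intro x hx y hy hxy
      simp only [Finset.coe_sort_coe, Finset.mem_coe] at hx hy
      by_cases hxt : x = t <;> by_cases hyt : y = t
      · rw [hxt, hyt]
      · exfalso
        rw [hxt, Function.update_self, Function.update_of_ne hyt] at hxy
        exact hpriv y hy hyt (by
          rcases hval y (Finset.mem_erase.mpr ⟨hyt, hy⟩) with h | h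
          · exact Or.inl (hxy.trans h)
          · exact Or.inr (hxy.trans h))
      · exfalso
        rw [hyt, Function.update_self, Function.update_of_ne hxt] at hxy
        exact hpriv x hx hxt (by
          rcases hval x (Finset.mem_erase.mpr ⟨hxt, hx⟩) with h | h
          · exact Or.inl (hxy.symm.trans h)
          · exact Or.inr (hxy.symm.trans h))
      · rw [Function.update_of_ne hxt, Function.update_of_ne hyt] at hxy
        exact hinj (Finset.mem_coe.mpr (Finset.mem_erase.mpr ⟨hxt, hx⟩))
          (Finset.mem_coe.mpr (Finset.mem_erase.mpr ⟨hyt, hy⟩)) hxy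
    · intro s hs
      by_cases hst : s = t
      · rw [hst, Function.update_self]
        exact hv.imp (fun h => h) (fun h => h)
      · rw [Function.update_of_ne hst]
        exact hval s (Finset.mem_erase.mpr ⟨hst, hs⟩)

/-- Matching lemma: for a finite 2-primitive set `T`, writing each `t ∈ T` as
`t = m(t) · M(t)` with `m(t)` the largest divisor of `t` not exceeding `√t` and
`M(t) = t / m(t)`, there is an injective map `g : T → ℤ` with `g(t) ∈ {m(t), M(t)}`. -/
theorem exists_matching (T : Finset ℕ) (hT : KPrimitive 2 ↑T) (m : ℕ → ℕ)
    (hm : ∀ t ∈ T, m t ∣ t ∧ m t ^ 2 ≤ t ∧ ∀ d : ℕ, d ∣ t → d ^ 2 ≤ t → d ≤ m t) :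
    ∃ g : ℕ → ℤ, Set.InjOn g ↑T ∧
      ∀ t ∈ T, g t = (m t : ℤ) ∨ g t = ((t / m t : ℕ) : ℤ) := by
  classical
  have h2 : ∀ a ∈ T, ∀ b ∈ T, ∀ c ∈ T, a ≠ b → a ≠ c → b ≠ c → ¬a ∣ b * c := by
    intro a ha b hb c hc hab hac hbc hdvd
    refine hT.2.2 a (by exact_mod_cast ha) {b, c} ?_ ?_ ?_
    · intro x hx
      simp only [Finset.coe_insert, Finset.coe_singleton, Set.mem_insert_iff,
        Set.mem_singleton_iff] at hx
      rcases hx with rfl | rfl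
      · exact ⟨by exact_mod_cast hb, fun h => hab (by simpa using h.symm)⟩
      · exact ⟨by exact_mod_cast hc, fun h => hac (by simpa using h.symm)⟩
    · rw [Finset.card_insert_of_notMem (by simpa using hbc), Finset.card_singleton]
    · rwa [Finset.prod_pair hbc]
  obtain ⟨c, hinj, hval⟩ := match_aux T h2 m hm T.card T rfl (subset_refl T)
  refine ⟨fun t => (c t : ℤ), ?_, ?_⟩
  · intro x hx y hy hxy
    have hxy' : (c x : ℤ) = (c y : ℤ) := hxy
    exact hinj hx hy (by exact_mod_cast hxy')
  · intro t ht
    rcases hval t ht with h | h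
    · exact Or.inl (show (c t : ℤ) = (m t : ℤ) by exact_mod_cast h)
    · exact Or.inr (show (c t : ℤ) = ((t / m t : ℕ) : ℤ) by exact_mod_cast h)
end

section
/- Let 0 < θ < 1/3 be real and let T be a 2-primitive set of integers greater than 1 such that P(t) < t^θ for every t ∈ T, where P(t) denotes the largest prime factor of t. For real z ≥ 2, let N(z) be the number of elements of T in [2, z]. Then N(z) < z^{(1+θ)/2} − Σ_q ⌊z^{(1+θ)/2}/q⌋, where q runs over the primes in the interval [z^{(1+θ)/4}, z^{(1+θ)/2}). -/
/-!
Write `X = z^((1+θ)/2)` and `Q = z^((1+θ)/4)`, so that `Q² = X`. Every prime factor of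
`t ∈ T ∩ [2, z]` is below `z^θ ≤ Q`, and `t * p < z^(1+θ) = X²` for each prime `p ∣ t`; hence
splitting off the largest divisor `d ≤ X` of `t` writes `t = d * m` with `1 < d ≤ X`, `m ≤ X`,
both `Q`-smooth. Read as edges from `d` to `m`, the elements of a 2-primitive set form stars,
which gives an injection of `T ∩ [2, z]` into the `Q`-smooth numbers in `[2, X]`. These are
disjoint from the multiples up to `X` of the primes `q ∈ [Q, X)`, and multiples of two different
such primes are disjoint because `q * q' > Q² = X`; all of them fit into `[2, X]`.
-/

open scoped BigOperators ENNReal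

/-- `maxPrimeFac t` is the largest prime factor `P(t)` of `t`. -/
def maxPrimeFac (t : ℕ) : ℕ := t.primeFactors.sup id

open Finset Nat

namespace KPrimitive

variable {k : ℕ} {A : Set ℕ}

theorem primitive (hA : KPrimitive k A) (hk : 1 ≤ k) : Primitive A := by
  refine ⟨hA.1, fun a ha b hb hab hdvd => ?_⟩
  have hbA : {b} ⊆ A \ {a} := Set.singleton_subset_iff.mpr ⟨hb, hab.symm⟩
  have hkA : (k : ℕ∞) ≤ (A \ {a}).encard := by
    rw [← ENat.add_le_add_iff_right ENat.one_ne_top, Set.encard_sdiff_singleton_add_one ha]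
    exact hA.2.1
  obtain ⟨B, hbB, hBA, hBk⟩ := Set.exists_superset_subset_encard_eq hbA (by simpa using hk) hkA
  have hBfin : B.Finite := Set.finite_of_encard_eq_coe hBk
  refine hA.2.2 a ha hBfin.toFinset (by simpa using hBA) ?_ ?_
  · rw [hBfin.encard_eq_coe_toFinset_card] at hBk
    exact_mod_cast hBk
  · exact hdvd.trans (dvd_prod_of_mem _ (by simpa using hbB))

theorem not_dvd_mul_s14 (hA : KPrimitive 2 A) {a b c : ℕ} (ha : a ∈ A) (hb : b ∈ A) (hc : c ∈ A)
    (hab : a ≠ b) (hac : a ≠ c) (hbc : b ≠ c) : ¬a ∣ b * c := by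
  have hbcA : ↑({b, c} : Finset ℕ) ⊆ A \ {a} := by
    simp [Set.insert_subset_iff, hb, hc, hab.symm, hac.symm]
  simpa [prod_pair hbc] using hA.2.2 a ha {b, c} hbcA (card_pair hbc)

end KPrimitive

theorem exists_fiber_rep_preferring_square (W : Finset ℕ) {d m : ℕ → ℕ}
    (hdm : ∀ t ∈ W, d t * m t = t) :
    ∃ ℓ : ℕ → ℕ, ∀ t ∈ W, ℓ (d t) ∈ W ∧ d (ℓ (d t)) = d t ∧ (m t = d t → ℓ (d t) = t) := by
  have hrep (v) : ∃ s, ∀ t ∈ W, d t = v → s ∈ W ∧ d s = v ∧ (m t = v → s = t) := by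
    by_cases hsq : ∃ s ∈ W, d s = v ∧ m s = v
    · obtain ⟨s, hs, hds, hms⟩ := hsq
      refine ⟨s, fun t ht hdt => ⟨hs, hds, fun hmt => ?_⟩⟩
      rw [← hdm s hs, ← hdm t ht, hds, hms, hdt, hmt]
    by_cases hne : ∃ s ∈ W, d s = v
    · obtain ⟨s, hs, hds⟩ := hne
      exact ⟨s, fun t ht hdt => ⟨hs, hds, fun hmt => absurd ⟨t, ht, hdt, hmt⟩ hsq⟩⟩
    · exact ⟨0, fun t ht hdt => absurd ⟨t, ht, hdt⟩ hne⟩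
  choose ℓ hℓ using hrep
  exact ⟨ℓ, fun t ht => hℓ _ t ht rfl⟩

/-- Send one element of each fibre of `d` (the square `v * v` if the fibre contains it) to `d t`
and every other `t` to `m t`. A collision would give `s, u ≠ t` in `W` with `d t ∣ s` and
`m t ∣ u`, whence `t ∣ s * u`. -/
theorem Finset.card_le_card_of_forall_mul_eq {W S : Finset ℕ} {d m : ℕ → ℕ}
    (hprim : ∀ a ∈ W, ∀ b ∈ W, a ≠ b → ¬a ∣ b)
    (hmul : ∀ a ∈ W, ∀ b ∈ W, ∀ c ∈ W, a ≠ b → a ≠ c → b ≠ c → ¬a ∣ b * c)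
    (hdm : ∀ t ∈ W, d t * m t = t) (hd : ∀ t ∈ W, d t ∈ S) (hm : ∀ t ∈ W, m t ∈ insert 1 S) :
    #W ≤ #S := by
  obtain ⟨ℓ, hℓ⟩ := exists_fiber_rep_preferring_square W hdm
  have hd_dvd (t) (ht : t ∈ W) : d t ∣ ℓ (d t) := Dvd.intro _ ((hℓ t ht).2.1 ▸ hdm _ (hℓ t ht).1)
  have hstar (t) (ht : t ∈ W) (htℓ : t ≠ ℓ (d t)) (u) (hu : u ∈ W) (hmu : m t ∣ u)
      (huℓ : u ≠ ℓ (d t)) (hut : u ≠ t) : False := by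
    refine hmul t ht _ (hℓ t ht).1 u hu htℓ hut.symm huℓ.symm ?_
    simpa only [hdm t ht] using mul_dvd_mul (hd_dvd t ht) hmu
  have hm_mem (t) (ht : t ∈ W) (htℓ : t ≠ ℓ (d t)) : m t ∈ S := by
    refine (mem_insert.mp (hm t ht)).resolve_left fun hm1 => ?_
    have hdt : d t = t := by simpa [hm1] using hdm t ht
    exact hprim t ht _ (hℓ t ht).1 htℓ (by simpa [hdt] using hd_dvd t ht)
  have hmixed (a) (ha : a ∈ W) (b) (hb : b ∈ W) (hbℓ : b ≠ ℓ (d b)) (hab : d a = m b) :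
      a = b := by
    by_contra hne
    refine hstar b hb hbℓ a ha (hab ▸ Dvd.intro _ (hdm a ha)) (fun h => hbℓ ?_) hne
    exact ((hℓ b hb).2.2 (hab ▸ h ▸ (hℓ b hb).2.1)).symm
  refine card_le_card_of_injOn (fun t => if t = ℓ (d t) then d t else m t) ?_ ?_
  · intro t ht
    dsimp only
    split_ifs with htℓ
    · exact hd t ht
    · exact hm_mem t ht htℓ
  · intro t ht t' ht' heq
    dsimp only at heq
    split_ifs at heq with h h' h'
    · calc t = ℓ (d t) := h
        _ = ℓ (d t') := by rw [heq]
        _ = t' := h'.symm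
    · exact hmixed t ht t' ht' h' heq
    · exact (hmixed t' ht' t ht h heq.symm).symm
    · by_contra hne
      refine hstar t ht h t' ht' (heq ▸ Dvd.intro_left _ (hdm t' ht')) (fun h'' => ?_) (Ne.symm hne)
      have hdd : d t' = d t := h'' ▸ (hℓ t ht).2.1
      exact hne (by rw [← hdm t ht, ← hdm t' ht', hdd, heq])

theorem Nat.exists_mul_eq_of_mul_prime_lt {t M : ℕ} (ht : 2 ≤ t)
    (hp : ∀ p, p.Prime → p ∣ t → t * p < (M + 1) * (M + 1)) :
    ∃ d m, d * m = t ∧ 2 ≤ d ∧ d ≤ M ∧ m ≤ M := by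
  have hq := Nat.minFac_prime (by omega : t ≠ 1)
  have hqM : t.minFac ≤ M := by
    have := hp _ hq (Nat.minFac_dvd t)
    have := Nat.minFac_le (by omega : 0 < t)
    nlinarith
  set d := Nat.findGreatest (· ∣ t) M
  have hdt : d ∣ t := Nat.findGreatest_spec (P := (· ∣ t)) hqM (Nat.minFac_dvd t)
  have hmax (e) (he : e ∣ t) (heM : e ≤ M) : e ≤ d := Nat.le_findGreatest heM he
  have hd2 : 2 ≤ d := hq.two_le.trans (hmax _ (Nat.minFac_dvd t) hqM)
  have hdM : d ≤ M := Nat.findGreatest_le M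
  obtain ⟨m, hdm⟩ := hdt
  refine ⟨d, m, hdm.symm, hd2, hdM, ?_⟩
  rcases eq_or_ne m 1 with rfl | hm1
  · omega
  have hr := Nat.minFac_prime hm1
  have hdr : M < d * m.minFac := by
    by_contra! hle
    have := hmax _ (hdm ▸ mul_dvd_mul_left d (Nat.minFac_dvd m)) hle
    nlinarith [hr.two_le]
  have := hp _ hr (hdm ▸ dvd_mul_of_dvd_right (Nat.minFac_dvd m) d)
  rw [hdm] at this
  nlinarith

theorem Nat.sum_div_le_card_roughNumbersUpTo {M y : ℕ} {P : Finset ℕ}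
    (hP : ∀ q ∈ P, q.Prime ∧ y ≤ q) (hM : M ≤ y * y) :
    ∑ q ∈ P, M / q ≤ #(roughNumbersUpTo M y) := by
  set multiples : ℕ → Finset ℕ := fun q => {n ∈ range (M + 1) | n ≠ 0 ∧ q ∣ n}
  have hdisj : (P : Set ℕ).PairwiseDisjoint multiples := by
    intro q hq q' hq' hne
    refine disjoint_left.mpr fun n hn hn' => ?_
    simp only [multiples, mem_filter, mem_range] at hn hn'
    have hqq' : q * q' ≤ n := Nat.le_of_dvd (Nat.pos_of_ne_zero hn.2.1)
      (Nat.Coprime.mul_dvd_of_dvd_of_dvd ((Nat.coprime_primes (hP q hq).1 (hP q' hq').1).mpr hne)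
        hn.2.2 hn'.2.2)
    have hyq := (hP q hq).2
    have hyq' := (hP q' hq').2
    have hq2 := (hP q hq).1.two_le
    have hq'2 := (hP q' hq').1.two_le
    have hnM : n ≤ M := Nat.lt_succ_iff.mp hn.1
    rcases lt_or_gt_of_ne hne with h | h <;> nlinarith [Nat.mul_le_mul hyq hyq']
  have hsub : P.biUnion multiples ⊆ roughNumbersUpTo M y := by
    intro n hn
    obtain ⟨q, hq, hn⟩ := mem_biUnion.mp hn
    simp only [multiples, mem_filter] at hn
    refine mem_filter.mpr ⟨hn.1, hn.2.1, fun hsmooth => ?_⟩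
    exact absurd (hP q hq).2 (not_le.mpr (mem_smoothNumbers'.mp hsmooth q (hP q hq).1 hn.2.2))
  calc ∑ q ∈ P, M / q = ∑ q ∈ P, #(multiples q) := by simp only [multiples, card_multiples']
    _ = #(P.biUnion multiples) := (card_biUnion hdisj).symm
    _ ≤ #(roughNumbersUpTo M y) := card_le_card hsub

theorem card_add_sum_div_lt {T : Set ℕ} (hT : KPrimitive 2 T) {W P : Finset ℕ} {M y : ℕ}
    (hWT : ↑W ⊆ T)
    (hW : ∀ t ∈ W, t ∈ smoothNumbers y ∧ ∀ p, p.Prime → p ∣ t → t * p < (M + 1) * (M + 1))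
    (hP : ∀ q ∈ P, q.Prime ∧ y ≤ q) (hM : 1 ≤ M) (hMy : M ≤ y * y) :
    #W + ∑ q ∈ P, M / q < M := by
  have hone : 1 ∈ smoothNumbersUpTo M y := mem_smoothNumbersUpTo.mpr ⟨hM,
    mem_smoothNumbers'.mpr fun p hp hp1 => absurd (eq_one_of_dvd_one hp1 ▸ hp) Nat.not_prime_one⟩
  have hsmooth (t) (ht : t ∈ W) (e) (het : e ∣ t) (heM : e ≤ M) : e ∈ smoothNumbersUpTo M y :=
    mem_smoothNumbersUpTo.mpr ⟨heM, mem_smoothNumbers_of_dvd (hW t ht).1 het⟩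
  choose! d m hdm using fun t ht => exists_mul_eq_of_mul_prime_lt (hT.1 t (hWT ht)) (hW t ht).2
  have hWS : #W ≤ #((smoothNumbersUpTo M y).erase 1) := by
    refine card_le_card_of_forall_mul_eq
      (fun a ha b hb => (hT.primitive one_le_two).2 a (hWT ha) b (hWT hb))
      (fun a ha b hb c hc => hT.not_dvd_mul_s14 (hWT ha) (hWT hb) (hWT hc))
      (fun t ht => (hdm t ht).1) (fun t ht => ?_) (fun t ht => ?_)
    · obtain ⟨hdmt, hd2, hdM, -⟩ := hdm t ht
      exact mem_erase.mpr ⟨by omega, hsmooth t ht _ (Dvd.intro _ hdmt) hdM⟩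
    · obtain ⟨hdmt, -, -, hmM⟩ := hdm t ht
      rw [insert_erase hone]
      exact hsmooth t ht _ (Dvd.intro_left _ hdmt) hmM
  have := card_erase_add_one hone
  have := smoothNumbersUpTo_card_add_roughNumbersUpTo_card M y
  have := sum_div_le_card_roughNumbersUpTo hP hMy
  omega

theorem ncard_setOf_mem_le_eq_card (T : Set ℕ) [DecidablePred (· ∈ T)] {z : ℝ} (hz : 0 ≤ z) :
    {t : ℕ | t ∈ T ∧ 2 ≤ t ∧ (t : ℝ) ≤ z}.ncard = #{t ∈ Icc 2 ⌊z⌋₊ | t ∈ T} := by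
  rw [← Set.ncard_coe_finset]
  congr 1
  ext t
  simp only [Set.mem_ofPred_eq, coe_filter, mem_Icc, Nat.le_floor_iff hz]
  tauto

theorem Nat.Prime.cast_lt_rpow_of_dvd {θ z : ℝ} (hθ : 0 ≤ θ) {p t : ℕ} (hp : p.Prime)
    (hpt : p ∣ t) (ht : t ≠ 0) (hP : (maxPrimeFac t : ℝ) < (t : ℝ) ^ θ) (htz : (t : ℝ) ≤ z) :
    (p : ℝ) < z ^ θ :=
  calc (p : ℝ) ≤ maxPrimeFac t := by
        exact_mod_cast le_sup (f := id) (Nat.mem_primeFactors.mpr ⟨hp, hpt, ht⟩)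
    _ < t ^ θ := hP
    _ ≤ z ^ θ := Real.rpow_le_rpow (by positivity) htz hθ

theorem tsum_floor_div_eq_sum {X : ℝ} (hX : 0 ≤ X) (Q : ℝ) :
    ∑' q : {q : ℕ | q.Prime ∧ Q ≤ (q : ℝ) ∧ (q : ℝ) < X}, (⌊X / ((q : ℕ) : ℝ)⌋ : ℝ) =
      ∑ q ∈ ({q ∈ range (⌊X⌋₊ + 1) | q.Prime ∧ Q ≤ (q : ℝ) ∧ (q : ℝ) < X} : Finset ℕ),
        ((⌊X⌋₊ / q : ℕ) : ℝ) := by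
  have hwindow : {q : ℕ | q.Prime ∧ Q ≤ (q : ℝ) ∧ (q : ℝ) < X} =
      ↑({q ∈ range (⌊X⌋₊ + 1) | q.Prime ∧ Q ≤ (q : ℝ) ∧ (q : ℝ) < X} : Finset ℕ) := by
    ext q
    simp only [Set.mem_ofPred_eq, coe_filter, mem_range, Nat.lt_succ_iff]
    exact ⟨fun h => ⟨Nat.le_floor h.2.2.le, h⟩, fun h => h.2⟩
  rw [hwindow, tsum_subtype' _ fun q : ℕ => (⌊X / (q : ℝ)⌋ : ℝ)]
  refine sum_congr rfl fun q _ => ?_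
  rw [← Nat.floor_div_natCast, ← natCast_floor_eq_intCast_floor (by positivity)]

theorem mul_lt_floor_rpow_add_one_mul_self {θ z : ℝ} (hz : 0 < z) {t p : ℕ}
    (ht : (t : ℝ) ≤ z) (hp : (p : ℝ) < z ^ θ) :
    t * p < (⌊z ^ ((1 + θ) / 2)⌋₊ + 1) * (⌊z ^ ((1 + θ) / 2)⌋₊ + 1) := by
  have hX : z ^ ((1 + θ) / 2) * z ^ ((1 + θ) / 2) = z * z ^ θ := by
    rw [← Real.rpow_add hz, add_halves, Real.rpow_add hz, Real.rpow_one]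
  have : (t : ℝ) * p < (⌊z ^ ((1 + θ) / 2)⌋₊ + 1) * (⌊z ^ ((1 + θ) / 2)⌋₊ + 1) := by
    have := Nat.lt_floor_add_one (z ^ ((1 + θ) / 2))
    have : 0 ≤ z ^ ((1 + θ) / 2) := by positivity
    nlinarith
  exact_mod_cast this

theorem floor_rpow_le_ceil_rpow_mul_self {z a b : ℝ} (hz : 0 < z) (hab : a + a = b) :
    ⌊z ^ b⌋₊ ≤ ⌈z ^ a⌉₊ * ⌈z ^ a⌉₊ := by
  have : (⌊z ^ b⌋₊ : ℝ) ≤ ⌈z ^ a⌉₊ * ⌈z ^ a⌉₊ :=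
    calc (⌊z ^ b⌋₊ : ℝ) ≤ z ^ b := Nat.floor_le (by positivity)
      _ = z ^ a * z ^ a := by rw [← Real.rpow_add hz, hab]
      _ ≤ ⌈z ^ a⌉₊ * ⌈z ^ a⌉₊ := mul_self_le_mul_self (by positivity) (le_ceil _)
  exact_mod_cast this

/-- If `0 < θ < 1/3` and `T` is 2-primitive with `P(t) < t^θ` for all `t ∈ T`, then
`N(z) = #(T ∩ [2, z])` satisfies
`N(z) < z^{(1+θ)/2} - ∑_{q prime, z^{(1+θ)/4} ≤ q < z^{(1+θ)/2}} ⌊z^{(1+θ)/2}/q⌋`. -/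
theorem count_lt_of_smooth (θ : ℝ) (hθ0 : 0 < θ) (hθ1 : θ < 1 / 3) (T : Set ℕ)
    (hT : KPrimitive 2 T)
    (hP : ∀ t ∈ T, ((maxPrimeFac t : ℕ) : ℝ) < ((t : ℕ) : ℝ) ^ θ)
    (z : ℝ) (hz : 2 ≤ z) :
    (({t : ℕ | t ∈ T ∧ 2 ≤ t ∧ (t : ℝ) ≤ z}.ncard : ℕ) : ℝ) <
      z ^ ((1 + θ) / 2) -
        ∑' q : {q : ℕ | q.Prime ∧ z ^ ((1 + θ) / 4) ≤ (q : ℝ) ∧ (q : ℝ) < z ^ ((1 + θ) / 2)},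
          (⌊z ^ ((1 + θ) / 2) / ((q : ℕ) : ℝ)⌋ : ℝ) := by
  classical
  have hz0 : 0 < z := by linarith
  set X := z ^ ((1 + θ) / 2)
  set Q := z ^ ((1 + θ) / 4)
  set W : Finset ℕ := {t ∈ Icc 2 ⌊z⌋₊ | t ∈ T}
  set P : Finset ℕ := {q ∈ range (⌊X⌋₊ + 1) | q.Prime ∧ Q ≤ (q : ℝ) ∧ (q : ℝ) < X}
  have hWT (t) (ht : t ∈ W) : t ∈ T ∧ (t : ℝ) ≤ z := by
    obtain ⟨⟨-, htz⟩, htT⟩ := by simpa only [W, mem_filter, mem_Icc] using ht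
    exact ⟨htT, (Nat.le_floor_iff hz0.le).mp htz⟩
  have hprime (t) (ht : t ∈ W) (p) (hp : p.Prime) (hpt : p ∣ t) : (p : ℝ) < z ^ θ :=
    hp.cast_lt_rpow_of_dvd hθ0.le hpt (ne_zero_of_lt (hT.1 t (hWT t ht).1))
      (hP t (hWT t ht).1) (hWT t ht).2
  have hcount : #W + ∑ q ∈ P, ⌊X⌋₊ / q < ⌊X⌋₊ := by
    refine card_add_sum_div_lt hT (y := ⌈Q⌉₊) (fun t ht => (hWT t ht).1)
      (fun t ht => ⟨?_, fun p hp hpt => ?_⟩) (fun q hq => ?_) ?_ ?_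
    · have hθQ : z ^ θ ≤ Q := Real.rpow_le_rpow_of_exponent_le (by linarith) (by linarith)
      exact mem_smoothNumbers'.mpr fun p hp hpt =>
        lt_ceil.mpr ((hprime t ht p hp hpt).trans_le hθQ)
    · exact mul_lt_floor_rpow_add_one_mul_self hz0 (hWT t ht).2 (hprime t ht p hp hpt)
    · simp only [P, mem_filter] at hq
      exact ⟨hq.2.1, ceil_le.mpr hq.2.2.1⟩
    · exact (one_le_floor_iff _).mpr (Real.one_le_rpow (by linarith) (by linarith))
    · exact floor_rpow_le_ceil_rpow_mul_self hz0 (by ring)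
  have hX : 0 ≤ X := by positivity
  rw [ncard_setOf_mem_le_eq_card T hz0.le, tsum_floor_div_eq_sum hX]
  have : ((#W + ∑ q ∈ P, ⌊X⌋₊ / q : ℕ) : ℝ) < ⌊X⌋₊ := by exact_mod_cast hcount
  push_cast at this
  linarith [Nat.floor_le hX]
end
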